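/- arXiv:1908.11088 — 7 statements merged into one kernel-verified Lean document; each statement's English description precedes it below -/
import Mathlib

section
/- Let ξ ∈ 𝓕̄ and let ε be a real number with 0 < ε ≤ √3/(3|ξ|+2). Let τ ∈ ℍ and suppose γ = [[a,b],[c,d]] ∈ SL₂(ℤ) is such that γτ ∈ 𝓕̄ and |γτ − ξ| ≤ ε. Then there exists ν ∈ {±1} such that |a² + 2ν|Re(ξ)|ac + |ξ|²c² − Im(ξ)/Im(τ)| ≤ 7·((4|ξ|+1)/√3)·|ξ|²·ε^{1/2}/Im(τ). Moreover max{a², c²} ≤ ((4|ξ|+1)/√3)·(1/Im(τ)), |d| ≤ |c||Re(τ)| + (4|ξ|+1)/√3, and |b| ≤ |a||Re(τ)| + (4|ξ|+1)/√3. -/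
open Real

/-- The closed standard fundamental domain
`{τ ∈ ℍ : |Re τ| ≤ 1/2, |τ| ≥ 1}` viewed inside `ℂ`. -/
def inFD (z : ℂ) : Prop :=
  0 < z.im ∧ |z.re| ≤ 1 / 2 ∧ 1 ≤ ‖z‖

/-- The fractional linear (Möbius) action of an integer matrix `[[a,b],[c,d]]` on `ℂ`. -/
noncomputable def moebius (a b c d : ℤ) (τ : ℂ) : ℂ :=
  ((a : ℂ) * τ + (b : ℂ)) / ((c : ℂ) * τ + (d : ℂ))

/-!
Put `w = γτ` and `D = cτ + d`. Unimodularity gives `(a - c w) D = 1` and `Im w = Im τ / |D|²`, so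
the binary quadratic form `Q_w(x, y) = |x - y w|²` takes the value `Im w / Im τ` at `(a, c)`.
Because `w ∈ 𝓕̄`, `Q_w(x, y) ≥ x² - |x y| + y² ≥ (3/4) max(x², y²)`. This bounds `a²` and `c²`;
and since `x² - |x y| + y² ≥ 1` on nonzero integer vectors, `|a - c w| ≥ 1`, i.e. `|D| ≤ 1`, which
bounds `b` and `d`. Finally `Q_ξ(a, c) = a² + 2ν|Re ξ| a c + |ξ|² c²` for a suitable sign `ν`, and
`Q_ξ(a, c) - Im ξ / Im τ` differs from `Q_w(a, c) - Im w / Im τ = 0` by `O(|w - ξ|) = O(ε)`.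
-/

open Complex

lemma normSq_ofReal_sub_ofReal_mul (a c : ℝ) (z : ℂ) :
    normSq (a - c * z) = a ^ 2 - 2 * a * c * z.re + c ^ 2 * normSq z := by
  simp only [normSq_apply, sub_re, sub_im, mul_re, mul_im, ofReal_re, ofReal_im]
  ring

lemma three_div_four_mul_max_sq_le (a c : ℝ) :
    3 / 4 * max (a ^ 2) (c ^ 2) ≤ a ^ 2 - |a| * |c| + c ^ 2 := by
  rcases le_total (a ^ 2) (c ^ 2) with h | h
  · rw [max_eq_right h]
    nlinarith [sq_nonneg (2 * |a| - |c|), sq_abs a, sq_abs c]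
  · rw [max_eq_left h]
    nlinarith [sq_nonneg (|a| - 2 * |c|), sq_abs a, sq_abs c]

lemma Int.one_le_sq_sub_abs_mul_abs_add_sq {a c : ℤ} (h : a ≠ 0 ∨ c ≠ 0) :
    1 ≤ a ^ 2 - |a| * |c| + c ^ 2 := by
  have ha := abs_nonneg a
  have hc := abs_nonneg c
  rw [← sq_abs a, ← sq_abs c]
  rcases h with h | h
  · have := abs_pos.mpr h
    nlinarith
  · have := abs_pos.mpr h
    nlinarith

lemma exists_sign_eq_normSq_ofReal_sub_ofReal_mul (a c : ℝ) (z : ℂ) :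
    ∃ ν : ℝ, (ν = 1 ∨ ν = -1) ∧
      a ^ 2 + 2 * ν * |z.re| * (a * c) + ‖z‖ ^ 2 * c ^ 2 = normSq (a - c * z) := by
  rw [normSq_ofReal_sub_ofReal_mul, ← Complex.sq_norm]
  rcases abs_choice z.re with h | h
  · exact ⟨-1, Or.inr rfl, by rw [h]; ring⟩
  · exact ⟨1, Or.inl rfl, by rw [h]; ring⟩

lemma abs_le_abs_mul_abs_re_add_norm (p q : ℝ) (z : ℂ) : |q| ≤ |p| * |z.re| + ‖p * z + q‖ := by
  have hre : (p * z + q : ℂ).re = p * z.re + q := by simp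
  calc |q| = |(p * z + q : ℂ).re - p * z.re| := by rw [hre]; ring_nf
    _ ≤ |(p * z + q : ℂ).re| + |p * z.re| := abs_sub _ _
    _ ≤ ‖(p * z + q : ℂ)‖ + |p| * |z.re| := by rw [abs_mul]; gcongr; exact abs_re_le_norm _
    _ = |p| * |z.re| + ‖p * z + q‖ := add_comm _ _

lemma abs_mul_abs_le_max_sq (x y : ℝ) : |x| * |y| ≤ max (x ^ 2) (y ^ 2) := by
  nlinarith [two_mul_le_add_sq |x| |y|, sq_abs x, sq_abs y, le_max_left (x ^ 2) (y ^ 2),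
    le_max_right (x ^ 2) (y ^ 2)]

lemma abs_normSq_sub_mul_sub_im_div_le {w ξ : ℂ} {a c t : ℝ} (ht : 0 < t)
    (h : normSq (a - c * w) = w.im / t) :
    |normSq (a - c * ξ) - ξ.im / t|
      ≤ (1 / t + max (a ^ 2) (c ^ 2) * (2 + ‖w‖ + ‖ξ‖)) * ‖w - ξ‖ := by
  rw [normSq_ofReal_sub_ofReal_mul] at h ⊢
  have hsplit : a ^ 2 - 2 * a * c * ξ.re + c ^ 2 * normSq ξ - ξ.im / t
      = (w.im - ξ.im) / t + 2 * a * c * (w.re - ξ.re) + c ^ 2 * (normSq ξ - normSq w) := by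
    linear_combination h
  have him : |w.im - ξ.im| ≤ ‖w - ξ‖ := by simpa using abs_im_le_norm (w - ξ)
  have hre : |w.re - ξ.re| ≤ ‖w - ξ‖ := by simpa using abs_re_le_norm (w - ξ)
  have hnormSq : |normSq ξ - normSq w| ≤ (‖w‖ + ‖ξ‖) * ‖w - ξ‖ := by
    rw [← Complex.sq_norm, ← Complex.sq_norm, sq_sub_sq, abs_mul, abs_of_nonneg (by positivity),
      add_comm, abs_sub_comm]
    gcongr
    exact abs_norm_sub_norm_le w ξ
  have hac := abs_mul_abs_le_max_sq a c
  have hc : c ^ 2 ≤ max (a ^ 2) (c ^ 2) := le_max_right _ _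
  rw [hsplit]
  calc _ ≤ |(w.im - ξ.im) / t| + |2 * a * c * (w.re - ξ.re)| + |c ^ 2 * (normSq ξ - normSq w)| :=
        abs_add_three _ _ _
    _ = |w.im - ξ.im| / t + 2 * (|a| * |c|) * |w.re - ξ.re| + c ^ 2 * |normSq ξ - normSq w| := by
        simp only [abs_div, abs_mul, abs_of_pos ht, abs_two, abs_pow, sq_abs, mul_assoc]
    _ ≤ ‖w - ξ‖ / t + 2 * max (a ^ 2) (c ^ 2) * ‖w - ξ‖
          + max (a ^ 2) (c ^ 2) * ((‖w‖ + ‖ξ‖) * ‖w - ξ‖) := by gcongr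
    _ = _ := by ring

lemma inFD.sq_sub_abs_mul_abs_add_sq_le_normSq {w : ℂ} (hw : inFD w) (a c : ℝ) :
    a ^ 2 - |a| * |c| + c ^ 2 ≤ normSq (a - c * w) := by
  obtain ⟨-, hre, hnorm⟩ := hw
  have hnormSq : 1 ≤ normSq w := by rw [← Complex.sq_norm]; nlinarith
  have hcross : 2 * a * c * w.re ≤ |a| * |c| := by
    calc 2 * a * c * w.re ≤ |2 * a * c * w.re| := le_abs_self _
      _ = 2 * |a| * |c| * |w.re| := by simp only [abs_mul, abs_two]
      _ ≤ 2 * |a| * |c| * (1 / 2) := by gcongr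
      _ = |a| * |c| := by ring
  rw [normSq_ofReal_sub_ofReal_mul]
  nlinarith [sq_nonneg c]

section Moebius

variable {a b c d : ℤ} {τ : ℂ}

lemma moebius_im (hdet : a * d - b * c = 1) :
    (moebius a b c d τ).im = τ.im / normSq (c * τ + d) := by
  have hdetR : (a : ℝ) * d - b * c = 1 := by exact_mod_cast hdet
  rw [moebius, div_im, ← sub_div]
  congr 1
  simp only [add_re, add_im, mul_re, mul_im, intCast_re, intCast_im]
  linear_combination τ.im * hdetR

lemma denom_ne_zero_of_inFD (h : inFD (moebius a b c d τ)) : (c : ℂ) * τ + d ≠ 0 := by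
  intro hD
  simpa [moebius, hD] using h.1

lemma sub_mul_moebius_mul_denom (hdet : a * d - b * c = 1) (hD : (c : ℂ) * τ + d ≠ 0) :
    ((a : ℂ) - c * moebius a b c d τ) * (c * τ + d) = 1 := by
  have hdetC : (a : ℂ) * d - b * c = 1 := by exact_mod_cast hdet
  rw [moebius, sub_mul, mul_assoc, div_mul_cancel₀ _ hD]
  linear_combination hdetC

lemma normSq_sub_mul_moebius (hdet : a * d - b * c = 1) (hτ : 0 < τ.im)
    (hD : (c : ℂ) * τ + d ≠ 0) :
    normSq ((a : ℂ) - c * moebius a b c d τ) = (moebius a b c d τ).im / τ.im := by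
  have h := congrArg normSq (sub_mul_moebius_mul_denom hdet hD)
  rw [map_mul, map_one] at h
  rw [moebius_im hdet, div_div_cancel_left' hτ.ne', eq_inv_of_mul_eq_one_left h]

lemma norm_denom_le_one_of_inFD (hdet : a * d - b * c = 1) (h : inFD (moebius a b c d τ)) :
    ‖(c : ℂ) * τ + d‖ ≤ 1 := by
  have hac : a ≠ 0 ∨ c ≠ 0 := by
    by_contra! hac
    simp [hac.1, hac.2] at hdet
  have hform : (1 : ℝ) ≤ normSq ((a : ℂ) - c * moebius a b c d τ) := by
    have := h.sq_sub_abs_mul_abs_add_sq_le_normSq a c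
    push_cast at this
    exact le_trans (by exact_mod_cast Int.one_le_sq_sub_abs_mul_abs_add_sq hac) this
  have hprod := congrArg norm (sub_mul_moebius_mul_denom hdet (denom_ne_zero_of_inFD h))
  rw [norm_mul, norm_one] at hprod
  rw [normSq_eq_norm_sq, one_le_sq_iff_one_le_abs, abs_norm] at hform
  nlinarith [norm_nonneg ((c : ℂ) * τ + d)]

lemma max_sq_mul_im_le_of_inFD (hdet : a * d - b * c = 1) (hτ : 0 < τ.im)
    (h : inFD (moebius a b c d τ)) :
    max ((a : ℝ) ^ 2) ((c : ℝ) ^ 2) * τ.im ≤ 4 / 3 * (moebius a b c d τ).im := by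
  have hform := h.sq_sub_abs_mul_abs_add_sq_le_normSq a c
  push_cast at hform
  rw [normSq_sub_mul_moebius hdet hτ (denom_ne_zero_of_inFD h), le_div_iff₀ hτ] at hform
  nlinarith [three_div_four_mul_max_sq_le (a : ℝ) c]

lemma abs_d_le_of_inFD (hdet : a * d - b * c = 1) (h : inFD (moebius a b c d τ)) :
    |(d : ℝ)| ≤ |(c : ℝ)| * |τ.re| + 1 :=
  calc |(d : ℝ)| ≤ |(c : ℝ)| * |τ.re| + ‖(c : ℂ) * τ + d‖ := by
        simpa using abs_le_abs_mul_abs_re_add_norm c d τ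
    _ ≤ |(c : ℝ)| * |τ.re| + 1 := by grw [norm_denom_le_one_of_inFD hdet h]

lemma abs_b_le_of_inFD (hdet : a * d - b * c = 1) (h : inFD (moebius a b c d τ)) :
    |(b : ℝ)| ≤ |(a : ℝ)| * |τ.re| + ‖moebius a b c d τ‖ := by
  have hnum : (a : ℂ) * τ + b = moebius a b c d τ * ((c : ℂ) * τ + d) :=
    (div_mul_cancel₀ _ (denom_ne_zero_of_inFD h)).symm
  calc |(b : ℝ)| ≤ |(a : ℝ)| * |τ.re| + ‖(a : ℂ) * τ + b‖ := by
        simpa using abs_le_abs_mul_abs_re_add_norm a b τ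
    _ ≤ |(a : ℝ)| * |τ.re| + ‖moebius a b c d τ‖ * 1 := by
        rw [hnum, norm_mul]
        grw [norm_denom_le_one_of_inFD hdet h]
    _ = |(a : ℝ)| * |τ.re| + ‖moebius a b c d τ‖ := by rw [mul_one]

end Moebius

lemma four_div_three_mul_add_le {r ε : ℝ} (hr : 1 ≤ r) (hε : ε ≤ √3 / (3 * r + 2)) :
    4 / 3 * (r + ε) ≤ (4 * r + 1) / √3 := by
  have hs0 : 0 < √3 := by positivity
  have hs : √3 ≤ 7 / 4 := by
    rw [sqrt_le_left (by norm_num)]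
    norm_num
  have hεs : ε * √3 ≤ 3 / 5 := by
    rw [le_div_iff₀ (by positivity)] at hε
    nlinarith [mul_self_sqrt (show (0 : ℝ) ≤ 3 by norm_num)]
  rw [le_div_iff₀ hs0]
  nlinarith

lemma le_one_of_le_sqrt_three_div {r ε : ℝ} (hr : 1 ≤ r) (hε : ε ≤ √3 / (3 * r + 2)) : ε ≤ 1 :=
  hε.trans <| (div_le_one (by positivity)).mpr <| by
    nlinarith [sqrt_le_self_iff.mpr (Or.inr (by norm_num : (1 : ℝ) ≤ 3))]

lemma one_add_mul_mul_le_mul_sqrt {r K ε : ℝ} (hr : 1 ≤ r) (hK : 1 ≤ K) (hε : 0 ≤ ε)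
    (hε1 : ε ≤ 1) : (1 + (2 * r + 3) * K) * ε ≤ 7 * K * r ^ 2 * √ε := by
  have hr2 : r ≤ r ^ 2 := by nlinarith
  gcongr
  · nlinarith [mul_le_mul_of_nonneg_left hr2 (by linarith : 0 ≤ K)]
  · exact le_sqrt_self_iff.mpr hε1

theorem matrix_entries_near_ellipse
    (ξ : ℂ) (hξ : inFD ξ) (ε : ℝ) (hε : 0 < ε)
    (hε' : ε ≤ Real.sqrt 3 / (3 * ‖ξ‖ + 2))
    (τ : ℂ) (hτ : 0 < τ.im)
    (a b c d : ℤ) (hdet : a * d - b * c = 1)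
    (hFD : inFD (moebius a b c d τ))
    (hclose : ‖moebius a b c d τ - ξ‖ ≤ ε) :
    (∃ ν : ℝ, (ν = 1 ∨ ν = -1) ∧
        |(a : ℝ) ^ 2 + 2 * ν * |ξ.re| * ((a : ℝ) * (c : ℝ))
            + (‖ξ‖) ^ 2 * (c : ℝ) ^ 2 - ξ.im / τ.im|
          ≤ 7 * ((4 * ‖ξ‖ + 1) / Real.sqrt 3) * (‖ξ‖) ^ 2
              * Real.sqrt ε / τ.im) ∧
    max ((a : ℝ) ^ 2) ((c : ℝ) ^ 2)
        ≤ (4 * ‖ξ‖ + 1) / Real.sqrt 3 * (1 / τ.im) ∧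
    |(d : ℝ)| ≤ |(c : ℝ)| * |τ.re| + (4 * ‖ξ‖ + 1) / Real.sqrt 3 ∧
    |(b : ℝ)| ≤ |(a : ℝ)| * |τ.re| + (4 * ‖ξ‖ + 1) / Real.sqrt 3 := by
  set w := moebius a b c d τ
  set K := (4 * ‖ξ‖ + 1) / √3
  have hr : 1 ≤ ‖ξ‖ := hξ.2.2
  have hK : 4 / 3 * (‖ξ‖ + ε) ≤ K := four_div_three_mul_add_le hr hε'
  have hK1 : 1 ≤ K := by linarith
  have hε1 : ε ≤ 1 := le_one_of_le_sqrt_three_div hr hε'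
  have hwξ : ‖w‖ ≤ ‖ξ‖ + ε := by linarith [norm_sub_norm_le w ξ]
  have hmax : max ((a : ℝ) ^ 2) ((c : ℝ) ^ 2) ≤ K * (1 / τ.im) := by
    rw [mul_one_div, le_div_iff₀ hτ]
    calc _ ≤ 4 / 3 * w.im := max_sq_mul_im_le_of_inFD hdet hτ hFD
      _ ≤ 4 / 3 * (‖ξ‖ + ε) := by grw [im_le_norm w, hwξ]
      _ ≤ K := hK
  refine ⟨?_, hmax, (abs_d_le_of_inFD hdet hFD).trans (by gcongr),
    (abs_b_le_of_inFD hdet hFD).trans (by gcongr; linarith)⟩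
  obtain ⟨ν, hν, hform⟩ := exists_sign_eq_normSq_ofReal_sub_ofReal_mul a c ξ
  have hQ : normSq (((a : ℝ) : ℂ) - ((c : ℝ) : ℂ) * w) = w.im / τ.im := by
    push_cast
    exact normSq_sub_mul_moebius hdet hτ (denom_ne_zero_of_inFD hFD)
  refine ⟨ν, hν, ?_⟩
  rw [hform]
  calc _ ≤ (1 / τ.im + max ((a : ℝ) ^ 2) ((c : ℝ) ^ 2) * (2 + ‖w‖ + ‖ξ‖)) * ‖w - ξ‖ :=
        abs_normSq_sub_mul_sub_im_div_le hτ hQ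
    _ ≤ (1 / τ.im + K * (1 / τ.im) * (2 * ‖ξ‖ + 3)) * ε := by
        gcongr (1 / τ.im + ?_ * ?_) * ?_
        linarith
    _ = (1 + (2 * ‖ξ‖ + 3) * K) * ε / τ.im := by ring
    _ ≤ 7 * K * ‖ξ‖ ^ 2 * √ε / τ.im := by
        gcongr ?_ / _
        exact one_add_mul_mul_le_mul_sqrt hr hK1 hε.le hε1
end

section
/- Let A, B, C be real numbers with A > 0, C > 0 and 4AC − B² > 0, and let E be the ellipse {(x,y) ∈ ℝ² : Ax² + Bxy + Cy² = 1}. Then the circumference (arc length of the boundary curve) L of E satisfies L ≤ √(2(A+C)) · vol(E), where vol(E) = 2π/√(4AC − B²) is the area enclosed by E. -/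
/-!
Completing the square, `T (x, y) = (√A x + B y / (2√A), √(4AC - B²) y / (2√A))` maps the ellipse
onto the unit circle. Lifting the angle of `T ∘ γ` writes `γ = F ∘ φ` on `[0, 1]`, where
`F θ = cos θ • P + sin θ • Q` with `P = T⁻¹ e₁`, `Q = T⁻¹ e₂` and `φ` is continuous. Injectivity of
`γ` on `[0, 1)` forces `φ` to be strictly monotone with `|φ 1 - φ 0| ≤ 2π`, so the variation of `γ`
is at most the length `∫ ‖F'‖` of one period of `F`. By AM-GM this is at most `2π` times the
root mean square of `‖F'‖`, which is `√((‖P‖² + ‖Q‖²) / 2) = √(2(A + C)) / √(4AC - B²)`.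
-/

open Real Set Function intervalIntegral

theorem eVariationOn_le_of_edist_le {α E F : Type*} [LinearOrder α] [PseudoEMetricSpace E]
    [PseudoEMetricSpace F] {f : α → E} {g : α → F} {s : Set α}
    (h : ∀ x ∈ s, ∀ y ∈ s, edist (f x) (f y) ≤ edist (g x) (g y)) :
    eVariationOn f s ≤ eVariationOn g s :=
  iSup_le fun ⟨_, _, hu, us⟩ =>
    (Finset.sum_le_sum fun _ _ => h _ (us _) _ (us _)).trans (eVariationOn.sum_le hu us)

theorem eVariationOn_Icc_le_integral_norm_deriv {E : Type*} [NormedAddCommGroup E]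
    [NormedSpace ℝ E] [CompleteSpace E] {f f' : ℝ → E} (hf : ∀ x, HasDerivAt f (f' x) x)
    (hf' : Continuous f') (a b : ℝ) :
    eVariationOn f (Icc a b) ≤ ENNReal.ofReal (∫ x in a..b, ‖f' x‖) := by
  set G : ℝ → ℝ := fun x => ∫ t in a..x, ‖f' t‖
  have hG : ∀ x y, G y - G x = ∫ t in x..y, ‖f' t‖ := fun x y =>
    integral_interval_sub_left (hf'.norm.intervalIntegrable a y) (hf'.norm.intervalIntegrable a x)
  have hGmono : Monotone G := fun x y hxy =>
    sub_nonneg.1 <| (hG x y).symm ▸ integral_nonneg hxy fun t _ => norm_nonneg (f' t)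
  calc eVariationOn f (Icc a b) ≤ eVariationOn G (univ ∩ Icc a b) := by
        refine (univ_inter _).symm ▸ eVariationOn_le_of_edist_le fun x _ y _ => ?_
        rw [edist_dist, edist_dist, dist_comm (G x), Real.dist_eq, hG, dist_eq_norm',
          ← integral_eq_sub_of_hasDerivAt (fun t _ => hf t) (hf'.intervalIntegrable x y)]
        exact ENNReal.ofReal_le_ofReal norm_integral_le_abs_integral_norm
    _ = ENNReal.ofReal (∫ x in a..b, ‖f' x‖) := by
        rw [(hGmono.monotoneOn univ).eVariationOn_eq (mem_univ a) (mem_univ b), hG]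

theorem integral_le_of_integral_sq_le {g : ℝ → ℝ} (hg : Continuous g) {a b K : ℝ} (hab : a ≤ b)
    (hK : 0 < K) (h : ∫ x in a..b, g x ^ 2 ≤ (b - a) * K ^ 2) :
    ∫ x in a..b, g x ≤ (b - a) * K := by
  have hpt : ∀ x, g x ≤ (g x ^ 2 + K ^ 2) / (2 * K) := fun x => by
    rw [le_div_iff₀ (by positivity)]
    nlinarith [sq_nonneg (g x - K)]
  calc ∫ x in a..b, g x ≤ ∫ x in a..b, (g x ^ 2 + K ^ 2) / (2 * K) :=
        integral_mono_on hab (hg.intervalIntegrable a b)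
          (by apply Continuous.intervalIntegrable; fun_prop) fun x _ => hpt x
    _ = ((∫ x in a..b, g x ^ 2) + (b - a) * K ^ 2) / (2 * K) := by
        rw [integral_div, integral_add (by apply Continuous.intervalIntegrable; fun_prop)
          intervalIntegrable_const, integral_const, smul_eq_mul]
    _ ≤ (b - a) * K := by
        rw [div_le_iff₀ (by positivity)]
        nlinarith

section Loop

variable {α : Type*} {F γ : ℝ → α} {φ : ℝ → ℝ}

theorem eq_zero_and_eq_one_of_eqOn_comp (hγ : EqOn γ (F ∘ φ) (Icc 0 1))
    (hinj : InjOn γ (Ico 0 1)) (hγ1 : γ 1 = γ 0) {s t : ℝ} (hs : s ∈ Icc 0 1)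
    (ht : t ∈ Icc 0 1) (hst : s < t) (hφst : φ s = φ t) : s = 0 ∧ t = 1 := by
  have hγst : γ s = γ t := by rw [hγ hs, hγ ht, comp_apply, comp_apply, hφst]
  obtain rfl | ht1 := ht.2.eq_or_lt
  · exact ⟨hinj ⟨hs.1, hst⟩ ⟨le_rfl, one_pos⟩ (hγst.trans hγ1), rfl⟩
  · exact absurd (hinj ⟨hs.1, hst.trans ht1⟩ ⟨ht.1, ht1⟩ hγst) hst.ne

theorem apply_zero_ne_apply_one_of_eqOn_comp (hφ : ContinuousOn φ (Icc 0 1))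
    (hγ : EqOn γ (F ∘ φ) (Icc 0 1)) (hinj : InjOn γ (Ico 0 1)) (hγ1 : γ 1 = γ 0) :
    φ 0 ≠ φ 1 := by
  intro h01
  have hne : φ 0 ≠ φ (1 / 2) := fun h => absurd (eq_zero_and_eq_one_of_eqOn_comp hγ hinj hγ1
    ⟨le_rfl, zero_le_one⟩ (by norm_num) (by norm_num) h).2 (by norm_num)
  -- a value strictly between `φ 0 = φ 1` and `φ (1/2)` is taken on both `[0, 1/2)` and `[1/2, 1]`
  set c := midpoint ℝ (φ 0) (φ (1 / 2))
  have hc : c ∈ uIcc (φ 0) (φ (1 / 2)) := segment_eq_uIcc (φ 0) _ ▸ midpoint_mem_segment _ _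
  have hleft : uIcc (0 : ℝ) (1 / 2) ⊆ Icc 0 1 := by
    rw [uIcc_of_le (by norm_num)]; exact Icc_subset_Icc_right (by norm_num)
  have hright : uIcc (1 / 2 : ℝ) 1 ⊆ Icc 0 1 := by
    rw [uIcc_of_le (by norm_num)]; exact Icc_subset_Icc_left (by norm_num)
  obtain ⟨s, hs, hsc⟩ := intermediate_value_uIcc (hφ.mono hleft) hc
  obtain ⟨t, ht, htc⟩ := intermediate_value_uIcc (hφ.mono hright)
    (show c ∈ uIcc (φ (1 / 2)) (φ 1) by rw [← h01, uIcc_comm]; exact hc)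
  rw [uIcc_of_le (by norm_num)] at hs ht
  have hs_half : s < 1 / 2 :=
    hs.2.lt_of_ne fun h => hne ((midpoint_eq_right_iff ℝ).1 (h ▸ hsc).symm)
  have hs0 := (eq_zero_and_eq_one_of_eqOn_comp hγ hinj hγ1 ⟨hs.1, by linarith [hs.2]⟩
    ⟨by linarith [ht.1], ht.2⟩ (hs_half.trans_le ht.1) (hsc.trans htc.symm)).1
  exact hne ((midpoint_eq_left_iff ℝ).1 (hs0 ▸ hsc).symm)

theorem strictMonoOn_or_strictAntiOn_of_eqOn_comp (hφ : ContinuousOn φ (Icc 0 1))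
    (hγ : EqOn γ (F ∘ φ) (Icc 0 1)) (hinj : InjOn γ (Ico 0 1)) (hγ1 : γ 1 = γ 0) :
    StrictMonoOn φ (Icc 0 1) ∨ StrictAntiOn φ (Icc 0 1) := by
  have h01 := apply_zero_ne_apply_one_of_eqOn_comp hφ hγ hinj hγ1
  refine hφ.strictMonoOn_of_injOn_Icc' zero_le_one fun s hs t ht hφst => ?_
  by_contra hst
  rcases lt_or_gt_of_ne hst with hst | hst
  · obtain ⟨rfl, rfl⟩ := eq_zero_and_eq_one_of_eqOn_comp hγ hinj hγ1 hs ht hst hφst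
    exact h01 hφst
  · obtain ⟨rfl, rfl⟩ := eq_zero_and_eq_one_of_eqOn_comp hγ hinj hγ1 ht hs hst hφst.symm
    exact h01 hφst.symm

theorem le_add_period_of_eqOn_comp {T : ℝ} (hT : 0 < T) (hF : Periodic F T)
    (hφ : ContinuousOn φ (Icc 0 1)) (hγ : EqOn γ (F ∘ φ) (Icc 0 1)) (hinj : InjOn γ (Ico 0 1)) :
    φ 1 ≤ φ 0 + T := by
  by_contra! hlt
  obtain ⟨t, ht, htT⟩ := intermediate_value_Icc zero_le_one hφ
    (⟨by linarith, hlt.le⟩ : φ 0 + T ∈ Icc (φ 0) (φ 1))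
  have ht1 : t < 1 := ht.2.lt_of_ne fun h => by rw [h] at htT; linarith
  have ht0 : t = 0 := hinj ⟨ht.1, ht1⟩ ⟨le_rfl, one_pos⟩ <| by
    rw [hγ ht, hγ ⟨le_rfl, zero_le_one⟩, comp_apply, comp_apply, htT, hF]
  rw [ht0] at htT
  linarith

theorem exists_eVariationOn_le_of_eqOn_comp_periodic [PseudoEMetricSpace α] {T : ℝ} (hT : 0 < T)
    (hF : Periodic F T) (hφ : ContinuousOn φ (Icc 0 1)) (hγ : EqOn γ (F ∘ φ) (Icc 0 1))
    (hinj : InjOn γ (Ico 0 1)) (hγ1 : γ 1 = γ 0) :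
    ∃ a, eVariationOn γ (Icc 0 1) ≤ eVariationOn F (Icc a (a + T)) := by
  rw [eVariationOn.eq_of_eqOn hγ]
  rcases strictMonoOn_or_strictAntiOn_of_eqOn_comp hφ hγ hinj hγ1 with hmono | hanti
  · refine ⟨φ 0, ?_⟩
    rw [eVariationOn.comp_eq_of_monotoneOn F φ hmono.monotoneOn]
    exact eVariationOn.mono F (hmono.monotoneOn.image_Icc_subset.trans
      (Icc_subset_Icc_right (le_add_period_of_eqOn_comp hT hF hφ hγ hinj)))
  · refine ⟨φ 1, ?_⟩
    have hF' : Periodic (F ∘ Neg.neg) T := fun x => by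
      simp only [comp_apply, neg_add, ← sub_eq_add_neg, hF.sub_eq]
    have h10 := le_add_period_of_eqOn_comp hT hF' hφ.neg
      (by simpa only [comp_def, Pi.neg_apply, neg_neg] using hγ) hinj
    rw [eVariationOn.comp_eq_of_antitoneOn F φ hanti.antitoneOn]
    exact eVariationOn.mono F (hanti.antitoneOn.image_Icc_subset.trans
      (Icc_subset_Icc_right (by simp only [Pi.neg_apply] at h10; linarith)))

end Loop

theorem exists_continuous_cos_sin_eq {u v : ℝ → ℝ} (hu : Continuous u) (hv : Continuous v)
    (huv : ∀ t, u t ^ 2 + v t ^ 2 = 1) :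
    ∃ φ : ℝ → ℝ, Continuous φ ∧ ∀ t ∈ Icc (0 : ℝ) 1, cos (φ t) = u t ∧ sin (φ t) = v t := by
  have hz : ∀ t, (u t + v t * Complex.I : ℂ) ∈ Submonoid.unitSphere ℂ := fun t => by
    change _ ∈ Metric.sphere (0 : ℂ) 1
    rw [mem_sphere_zero_iff_norm, Complex.norm_add_mul_I, huv, sqrt_one]
  let z : C(unitInterval, Circle) := ⟨fun t => ⟨_, hz t⟩, by fun_prop⟩
  obtain ⟨Γ, hΓ, -⟩ := Circle.isCoveringMap_exp.exists_path_lifts z _ (Circle.exp_arg (z 0)).symm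
  refine ⟨IccExtend zero_le_one Γ, Γ.continuous.Icc_extend', fun t ht => ?_⟩
  have hΓt : (Circle.exp (Γ ⟨t, ht⟩) : ℂ) = u t + v t * Complex.I :=
    congrArg ((↑) : Circle → ℂ) (congrFun hΓ ⟨t, ht⟩)
  rw [IccExtend_of_mem _ _ ht]
  simpa [Circle.coe_exp, Complex.ext_iff, Complex.exp_ofReal_mul_I_re,
    Complex.exp_ofReal_mul_I_im] using hΓt

section CosSmulAddSinSmul

variable {E : Type*} [NormedAddCommGroup E] [InnerProductSpace ℝ E]

theorem hasDerivAt_cos_smul_add_sin_smul (P Q : E) (θ : ℝ) :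
    HasDerivAt (fun θ => cos θ • P + sin θ • Q) (-sin θ • P + cos θ • Q) θ := by
  simpa only [neg_smul] using
    ((hasDerivAt_cos θ).smul_const P).fun_add ((hasDerivAt_sin θ).smul_const Q)

theorem integral_norm_neg_sin_smul_add_cos_smul_sq (P Q : E) :
    ∫ θ in 0..2 * π, ‖-sin θ • P + cos θ • Q‖ ^ 2 = π * (‖P‖ ^ 2 + ‖Q‖ ^ 2) := by
  have h : ∀ θ, ‖-sin θ • P + cos θ • Q‖ ^ 2 = ‖P‖ ^ 2 * sin θ ^ 2
      + -2 * inner ℝ P Q * (sin θ * cos θ) + ‖Q‖ ^ 2 * cos θ ^ 2 := fun θ => by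
    rw [norm_add_sq_real, norm_smul, norm_smul, real_inner_smul_left, real_inner_smul_right,
      Real.norm_eq_abs, Real.norm_eq_abs, abs_neg, mul_pow, mul_pow, sq_abs, sq_abs]
    ring
  simp only [h]
  rw [integral_add (by apply Continuous.intervalIntegrable; fun_prop)
      (by apply Continuous.intervalIntegrable; fun_prop),
    integral_add (by apply Continuous.intervalIntegrable; fun_prop)
      (by apply Continuous.intervalIntegrable; fun_prop),
    integral_const_mul, integral_const_mul, integral_const_mul, integral_sin_sq, integral_cos_sq,
    integral_sin_mul_cos₁]
  simp only [sin_two_pi, sin_zero, cos_two_pi, cos_zero]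
  ring

theorem eVariationOn_le_of_eqOn_cos_smul_add_sin_smul [CompleteSpace E] {γ : ℝ → E}
    {φ : ℝ → ℝ} {P Q : E} {K : ℝ} (hK : 0 < K) (hPQ : ‖P‖ ^ 2 + ‖Q‖ ^ 2 ≤ 2 * K ^ 2)
    (hφ : ContinuousOn φ (Icc 0 1)) (hγ : EqOn γ ((fun θ => cos θ • P + sin θ • Q) ∘ φ) (Icc 0 1))
    (hinj : InjOn γ (Ico 0 1)) (hγ1 : γ 1 = γ 0) :
    eVariationOn γ (Icc 0 1) ≤ ENNReal.ofReal (2 * π * K) := by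
  have hper : Periodic (fun θ => cos θ • P + sin θ • Q) (2 * π) := fun θ => by
    simp only [cos_add_two_pi, sin_add_two_pi]
  have hper' : Periodic (fun θ => ‖-sin θ • P + cos θ • Q‖) (2 * π) := fun θ => by
    simp only [cos_add_two_pi, sin_add_two_pi]
  obtain ⟨a, ha⟩ := exists_eVariationOn_le_of_eqOn_comp_periodic two_pi_pos hper hφ hγ hinj hγ1
  refine ha.trans <| (eVariationOn_Icc_le_integral_norm_deriv
    (hasDerivAt_cos_smul_add_sin_smul P Q) (by fun_prop) _ _).trans <| ENNReal.ofReal_le_ofReal ?_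
  rw [hper'.intervalIntegral_add_eq a 0, zero_add]
  calc ∫ θ in 0..2 * π, ‖-sin θ • P + cos θ • Q‖ ≤ (2 * π - 0) * K :=
        integral_le_of_integral_sq_le (by fun_prop) two_pi_pos.le hK <| by
          rw [integral_norm_neg_sin_smul_add_cos_smul_sq]
          nlinarith [pi_pos]
    _ = 2 * π * K := by ring

end CosSmulAddSinSmul

section Ellipse

variable {A B C : ℝ}

theorem quadratic_eq_sq_add_sq (hA : 0 < A) (hD : 0 ≤ 4 * A * C - B ^ 2) (x y : ℝ) :
    A * x ^ 2 + B * x * y + C * y ^ 2 =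
      (√A * x + B / (2 * √A) * y) ^ 2 + (√(4 * A * C - B ^ 2) / (2 * √A) * y) ^ 2 := by
  have ha : 0 < √A := sqrt_pos.2 hA
  rw [add_sq, mul_pow, mul_pow, mul_pow, div_pow, div_pow, mul_pow, sq_sqrt hA.le, sq_sqrt hD]
  field_simp
  ring

theorem eq_smul_add_smul_of_quadratic (hA : 0 < A) (hD : 0 < 4 * A * C - B ^ 2)
    (p : EuclideanSpace ℝ (Fin 2)) :
    p = (√A * p 0 + B / (2 * √A) * p 1) • !₂[1 / √A, 0] +
      (√(4 * A * C - B ^ 2) / (2 * √A) * p 1) •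
        !₂[-B / (√A * √(4 * A * C - B ^ 2)), 2 * √A / √(4 * A * C - B ^ 2)] := by
  have ha : 0 < √A := sqrt_pos.2 hA
  have hd : 0 < √(4 * A * C - B ^ 2) := sqrt_pos.2 hD
  ext i
  fin_cases i
  · simp only [Fin.zero_eta, PiLp.add_apply, PiLp.smul_apply, Matrix.cons_val_zero, smul_eq_mul]
    field_simp
    ring
  · simp only [Fin.mk_one, PiLp.add_apply, PiLp.smul_apply, Matrix.cons_val_one,
      Matrix.cons_val_fin_one, smul_eq_mul, mul_zero, zero_add]
    field_simp

theorem norm_sq_add_norm_sq_of_quadratic (hA : 0 < A) (hC : 0 < C)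
    (hD : 0 < 4 * A * C - B ^ 2) :
    ‖!₂[1 / √A, 0]‖ ^ 2 +
        ‖!₂[-B / (√A * √(4 * A * C - B ^ 2)), 2 * √A / √(4 * A * C - B ^ 2)]‖ ^ 2 =
      2 * (√(2 * (A + C)) / √(4 * A * C - B ^ 2)) ^ 2 := by
  have ha : 0 < √A := sqrt_pos.2 hA
  have hD' : A * 4 * C - B ^ 2 ≠ 0 := by linarith
  rw [div_pow, sq_sqrt (by positivity), EuclideanSpace.real_norm_sq_eq,
    EuclideanSpace.real_norm_sq_eq]
  simp only [Fin.sum_univ_two, Matrix.cons_val_zero, Matrix.cons_val_one, div_pow, mul_pow,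
    sq_sqrt hA.le, sq_sqrt hD.le]
  field_simp
  ring

end Ellipse

/-- The circumference of an ellipse `Ax² + Bxy + Cy² = 1` (with `A, C > 0` and
`4AC - B² > 0`), i.e. the arc length (total variation over one period) of any
continuous injective parametrization of the boundary, is at most
`√(2(A+C))` times the enclosed area `2π/√(4AC - B²)`. -/
theorem ellipse_circumference_le
    (A B C : ℝ) (hA : 0 < A) (hC : 0 < C) (hD : 0 < 4 * A * C - B ^ 2)
    (γ : ℝ → EuclideanSpace ℝ (Fin 2))
    (hcont : Continuous γ)
    (hper : ∀ t, γ (t + 1) = γ t)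
    (hinj : Set.InjOn γ (Set.Ico (0 : ℝ) 1))
    (himage : Set.range γ =
      {p : EuclideanSpace ℝ (Fin 2) |
        A * (p 0) ^ 2 + B * (p 0) * (p 1) + C * (p 1) ^ 2 = 1}) :
    eVariationOn γ (Set.Icc 0 1)
      ≤ ENNReal.ofReal
          (Real.sqrt (2 * (A + C)) * (2 * π / Real.sqrt (4 * A * C - B ^ 2))) := by
  have hγ : ∀ t, A * γ t 0 ^ 2 + B * γ t 0 * γ t 1 + C * γ t 1 ^ 2 = 1 := fun t =>
    (himage ▸ mem_range_self t :)
  obtain ⟨φ, hφ, hφγ⟩ := exists_continuous_cos_sin_eq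
    (u := fun t => √A * γ t 0 + B / (2 * √A) * γ t 1)
    (v := fun t => √(4 * A * C - B ^ 2) / (2 * √A) * γ t 1) (by fun_prop) (by fun_prop)
    fun t => (quadratic_eq_sq_add_sq hA hD.le _ _).symm.trans (hγ t)
  calc eVariationOn γ (Icc 0 1)
      ≤ ENNReal.ofReal (2 * π * (√(2 * (A + C)) / √(4 * A * C - B ^ 2))) := by
        refine eVariationOn_le_of_eqOn_cos_smul_add_sin_smul (by positivity)
          (norm_sq_add_norm_sq_of_quadratic hA hC hD).le hφ.continuousOn (fun t ht => ?_) hinj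
          (by simpa using hper 0)
        rw [comp_apply, (hφγ t ht).1, (hφγ t ht).2]
        exact eq_smul_add_smul_of_quadratic hA hD (γ t)
    _ = _ := by congr 1; ring
end

section
/- For every positive integer N one has σ₁(N) ≤ (π²/6)·ψ(N), where σ₁(N) is the sum of the positive divisors of N and ψ(N) = N·∏_{p | N, p prime} (1 + 1/p) is the Dedekind psi function. -/
open Real

/-- The Dedekind psi function `ψ(N) = N · ∏_{p | N prime} (1 + 1/p)`. -/
noncomputable def dedekindPsi (N : ℕ) : ℝ :=
  (N : ℝ) * ∏ p ∈ N.primeFactors, (1 + 1 / (p : ℝ))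

/-- Per-prime-power estimate: `σ(p^k) ≤ (1 - 1/p²)⁻¹ · p^k · (1 + 1/p)`. -/
lemma aux_prime_pow (p k : ℕ) (hp : p.Prime) :
    ((∑ i ∈ Finset.range (k + 1), p ^ i : ℕ) : ℝ) ≤
      (1 - 1 / (p : ℝ) ^ 2)⁻¹ * ((p : ℝ) ^ k * (1 + 1 / (p : ℝ))) := by
  have hx : (2 : ℝ) ≤ (p : ℝ) := by exact_mod_cast hp.two_le
  have hx0 : (0 : ℝ) < (p : ℝ) := by linarith
  have hx1 : (p : ℝ) ≠ 1 := by linarith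
  have hy : (0 : ℝ) < (p : ℝ) ^ k := pow_pos hx0 k
  push_cast
  rw [geom_sum_eq hx1]
  have h1 : (p : ℝ) ^ 2 - 1 ≠ 0 := by nlinarith
  have h2 : (p : ℝ) ≠ 0 := ne_of_gt hx0
  have h3 : (p : ℝ) - 1 ≠ 0 := sub_ne_zero.mpr hx1
  have key : (1 - 1 / (p : ℝ) ^ 2)⁻¹ * ((p : ℝ) ^ k * (1 + 1 / (p : ℝ)))
      = (p : ℝ) ^ k * (p : ℝ) / ((p : ℝ) - 1) := by
    rw [one_sub_div (by positivity), inv_div]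
    field_simp [h1, h3]
    ring
  rw [key, pow_succ]
  have hden : (0 : ℝ) < (p : ℝ) - 1 := by linarith
  rw [div_le_div_iff₀ hden hden]
  nlinarith

/-- The product of `(1 - 1/p²)⁻¹` over a finite set of primes is at most `π²/6`. -/
lemma aux_prod_le (s : Finset ℕ) (hs : ∀ p ∈ s, p.Prime) :
    ∏ p ∈ s, (1 - 1 / (p : ℝ) ^ 2)⁻¹ ≤ π ^ 2 / 6 := by
  set f : ℕ → ℝ := fun n => 1 / (n : ℝ) ^ 2 with hf
  have hf1 : f 1 = 1 := by simp [hf]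
  have hfmul : ∀ {m n : ℕ}, Nat.Coprime m n → f (m * n) = f m * f n := by
    intro m n _
    simp only [hf, Nat.cast_mul, mul_pow]
    rw [div_mul_div_comm, one_mul]
  have hsum : Summable fun n : ℕ => ‖f n‖ := by
    have := hasSum_zeta_two.summable
    refine this.congr fun n => ?_
    simp [hf, abs_of_nonneg, div_nonneg, sq_nonneg]
  have hEuler := EulerProduct.prod_filter_prime_tsum_eq_tsum_factoredNumbers
    hf1 hfmul hsum s
  have hfilter : {p ∈ s | p.Prime} = s := Finset.filter_true_of_mem hs
  rw [hfilter] at hEuler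
  have hterm : ∀ p ∈ s, (∑' n : ℕ, f (p ^ n)) = (1 - 1 / (p : ℝ) ^ 2)⁻¹ := by
    intro p hps
    have hp := hs p hps
    have hx : (2 : ℝ) ≤ (p : ℝ) := by exact_mod_cast hp.two_le
    have hr0 : (0 : ℝ) ≤ 1 / (p : ℝ) ^ 2 := by positivity
    have hr1 : 1 / (p : ℝ) ^ 2 < 1 := by
      rw [div_lt_one (by positivity)]; nlinarith
    have : (fun n : ℕ => f (p ^ n)) = fun n : ℕ => (1 / (p : ℝ) ^ 2) ^ n := by
      funext n
      simp [hf, div_pow, ← pow_mul, mul_comm]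
    rw [this, tsum_geometric_of_lt_one hr0 hr1]
  rw [Finset.prod_congr rfl hterm] at hEuler
  calc ∏ p ∈ s, (1 - 1 / (p : ℝ) ^ 2)⁻¹
      = ∑' m : Nat.factoredNumbers s, f m := hEuler
    _ ≤ ∑' n : ℕ, f n := Summable.tsum_subtype_le f _ (fun n => by positivity) hsum.of_norm
    _ = π ^ 2 / 6 := hasSum_zeta_two.tsum_eq

/-- For every positive integer `N`, `σ₁(N) ≤ (π²/6)·ψ(N)`. -/
theorem sigma_one_le_psi (N : ℕ) (hN : 0 < N) :
    ((∑ d ∈ N.divisors, d : ℕ) : ℝ) ≤ π ^ 2 / 6 * dedekindPsi N := by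
  have hNprod : ∏ p ∈ N.primeFactors, (p : ℝ) ^ N.factorization p = (N : ℝ) := by
    have h : ∏ p ∈ N.primeFactors, p ^ N.factorization p = N := by
      rw [← Nat.support_factorization]
      exact Nat.factorization_prod_pow_eq_self hN.ne'
    exact_mod_cast congrArg (Nat.cast (R := ℝ)) h
  rw [Nat.sum_divisors hN.ne', Nat.cast_prod]
  calc (∏ p ∈ N.primeFactors, ((∑ i ∈ Finset.range (N.factorization p + 1), p ^ i : ℕ) : ℝ))
      ≤ ∏ p ∈ N.primeFactors,
          (1 - 1 / (p : ℝ) ^ 2)⁻¹ * ((p : ℝ) ^ (N.factorization p) * (1 + 1 / (p : ℝ))) := by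
        refine Finset.prod_le_prod (fun p _ => by positivity) fun p hp => ?_
        exact aux_prime_pow p (N.factorization p) (Nat.prime_of_mem_primeFactors hp)
    _ = (∏ p ∈ N.primeFactors, (1 - 1 / (p : ℝ) ^ 2)⁻¹) *
          ((∏ p ∈ N.primeFactors, (p : ℝ) ^ (N.factorization p)) *
           ∏ p ∈ N.primeFactors, (1 + 1 / (p : ℝ))) := by
        rw [← Finset.prod_mul_distrib, ← Finset.prod_mul_distrib]
    _ ≤ π ^ 2 / 6 * ((∏ p ∈ N.primeFactors, (p : ℝ) ^ (N.factorization p)) *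
           ∏ p ∈ N.primeFactors, (1 + 1 / (p : ℝ))) := by
        refine mul_le_mul_of_nonneg_right
          (aux_prod_le _ fun p hp => Nat.prime_of_mem_primeFactors hp) ?_
        exact mul_nonneg (Finset.prod_nonneg fun p _ => by positivity)
          (Finset.prod_nonneg fun p _ => by positivity)
    _ = π ^ 2 / 6 * dedekindPsi N := by
        rw [dedekindPsi, hNprod]
end

section
/- For every integer n ≥ 4 one has ∑_{p | n, p prime} (log p)/p ≤ 5.25 · log(log n), where the sum runs over the distinct prime divisors of n. -/
/-! Split the prime divisors of `n` at `x = log n`. The primes `p > x` contribute at most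
`(∑_{p ∣ n} log p) / x ≤ log n / x = 1`. The primes `p ≤ x` contribute at most
`∑_{p ≤ x} log p / p ≤ 2 log x + log 4`, by a dyadic Chebyshev argument: the primes in
`(m, 2m]` divide the central binomial coefficient `(2m choose m) ≤ 4 ^ m`, so their terms
`log p / p` add up to at most `log 4`. This gives the claim once `log log n ≥ 1`; for
`log n < e` the crude bound `∑_{p ∣ n} log p / p ≤ log n / 2` suffices. -/

open Real Finset

lemma sum_log_le_log_of_prod_dvd {s : Finset ℕ} {N : ℕ} (hN : N ≠ 0)
    (h : ∏ p ∈ s, p ∣ N) : ∑ p ∈ s, log p ≤ log N := by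
  have hs : ∀ p ∈ s, (p : ℝ) ≠ 0 := fun p hp ↦
    Nat.cast_ne_zero.2 (ne_zero_of_dvd_ne_zero hN ((dvd_prod_of_mem _ hp).trans h))
  rw [← log_prod hs, ← Nat.cast_prod]
  exact log_le_log (Nat.cast_pos.2 (Nat.pos_of_ne_zero (ne_zero_of_dvd_ne_zero hN h)))
    (Nat.cast_le.2 (Nat.le_of_dvd (Nat.pos_of_ne_zero hN) h))

lemma sum_log_primeFactors_le_log (n : ℕ) : ∑ p ∈ n.primeFactors, log p ≤ log n := by
  rcases eq_or_ne n 0 with rfl | hn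
  · simp
  · exact sum_log_le_log_of_prod_dvd hn n.prod_primeFactors_dvd

lemma sum_log_div_self_le {s : Finset ℕ} {y : ℝ} (hy : 0 < y) (hs : ∀ p ∈ s, y ≤ p) :
    ∑ p ∈ s, log p / p ≤ (∑ p ∈ s, log p) / y := by
  rw [sum_div]
  exact sum_le_sum fun p hp ↦ div_le_div_of_nonneg_left (log_natCast_nonneg p) hy (hs p hp)

lemma prod_primes_Ioc_dvd_centralBinom (m : ℕ) :
    ∏ p ∈ Ioc m (2 * m) with p.Prime, p ∣ m.centralBinom := by
  refine prod_primes_dvd _ (fun p hp ↦ (mem_filter.1 hp).2.prime) fun p hp ↦ ?_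
  obtain ⟨hmem, hp⟩ := mem_filter.1 hp
  obtain ⟨hmp, hp2m⟩ := mem_Ioc.1 hmem
  rw [two_mul] at hp2m
  rw [Nat.centralBinom_eq_two_mul_choose, two_mul]
  exact hp.dvd_choose_add hmp hmp hp2m

lemma sum_log_primes_Ioc_le (m : ℕ) : ∑ p ∈ Ioc m (2 * m) with p.Prime, log p ≤ m * log 4 :=
  calc _ ≤ log m.centralBinom :=
        sum_log_le_log_of_prod_dvd (Nat.centralBinom_ne_zero m) (prod_primes_Ioc_dvd_centralBinom m)
    _ ≤ log ((4 : ℝ) ^ m) := log_le_log (Nat.cast_pos.2 m.centralBinom_pos)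
        (by exact_mod_cast m.centralBinom_le_four_pow)
    _ = m * log 4 := log_pow _ _

lemma sum_log_div_primes_Ioc_le {m : ℕ} (hm : 0 < m) :
    ∑ p ∈ Ioc m (2 * m) with p.Prime, log p / p ≤ log 4 := by
  have hm' : (0 : ℝ) < m := Nat.cast_pos.2 hm
  calc _ ≤ (∑ p ∈ Ioc m (2 * m) with p.Prime, log p) / m :=
        sum_log_div_self_le hm' fun p hp ↦ Nat.cast_le.2 (mem_Ioc.1 (mem_filter.1 hp).1).1.le
    _ ≤ m * log 4 / m := by gcongr; exact sum_log_primes_Ioc_le m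
    _ = log 4 := mul_div_cancel_left₀ _ hm'.ne'

lemma sum_log_div_primesLE_two_pow_le (K : ℕ) :
    ∑ p ∈ Nat.primesLE (2 ^ K), log p / p ≤ K * log 4 := by
  induction K with
  | zero => simp [Nat.primesLE_one]
  | succ K ih =>
    have hK : 2 ^ K ≤ 2 * 2 ^ K := by omega
    have hsplit : Nat.primesLE (2 ^ (K + 1)) =
        Nat.primesLE (2 ^ K) ∪ {p ∈ Ioc (2 ^ K) (2 * 2 ^ K) | p.Prime} := by
      rw [Nat.primesLE_eq_filter_Ioc_zero, Nat.primesLE_eq_filter_Ioc_zero, ← filter_union,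
        Ioc_union_Ioc_eq_Ioc (Nat.zero_le _) hK, pow_succ']
    have hdisj : Disjoint (Nat.primesLE (2 ^ K)) {p ∈ Ioc (2 ^ K) (2 * 2 ^ K) | p.Prime} := by
      rw [Nat.primesLE_eq_filter_Ioc_zero]
      exact disjoint_filter_filter (Ioc_disjoint_Ioc_of_le le_rfl)
    rw [hsplit, sum_union hdisj]
    push_cast
    linarith [sum_log_div_primes_Ioc_le (Nat.two_pow_pos K)]

lemma sum_log_div_primesLE_le (x : ℕ) :
    ∑ p ∈ Nat.primesLE x, log p / p ≤ 2 * log x + log 4 := by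
  rcases le_or_gt x 1 with hx | hx
  · interval_cases x <;> simp [Nat.primesLE_zero, Nat.primesLE_one] <;> positivity
  set K := Nat.clog 2 x
  have hK : 1 ≤ K := Nat.clog_pos one_lt_two hx
  have hlog : ((K : ℝ) - 1) * log 2 < log x := by
    have h := log_lt_log (by positivity)
      (by exact_mod_cast Nat.pow_pred_clog_lt_self one_lt_two hx : (2 : ℝ) ^ (K - 1) < x)
    rwa [log_pow, Nat.cast_sub hK, Nat.cast_one] at h
  calc _ ≤ ∑ p ∈ Nat.primesLE (2 ^ K), log p / p :=
        sum_le_sum_of_subset_of_nonneg (Nat.primesLE_mono (Nat.le_pow_clog one_lt_two x))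
          fun p _ _ ↦ div_nonneg (log_natCast_nonneg p) p.cast_nonneg
    _ ≤ K * log 4 := sum_log_div_primesLE_two_pow_le K
    _ ≤ 2 * log x + log 4 := by rw [log_four_eq]; linarith

lemma sum_log_div_primeFactors_le_half_log (n : ℕ) :
    ∑ p ∈ n.primeFactors, log p / p ≤ log n / 2 :=
  (sum_log_div_self_le two_pos fun _ hp ↦
      Nat.ofNat_le_cast.2 (Nat.prime_of_mem_primeFactors hp).two_le).trans
    (div_le_div_of_nonneg_right (sum_log_primeFactors_le_log n) zero_le_two)

lemma sum_log_div_primeFactors_le {n : ℕ} (hn : 1 ≤ log n) :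
    ∑ p ∈ n.primeFactors, log p / p ≤ 2 * log (log n) + log 4 + 1 := by
  set L := log n
  have hL : 0 < L := one_pos.trans_le hn
  rw [← sum_filter_add_sum_filter_not n.primeFactors (· ≤ ⌊L⌋₊)]
  have hhead : ∑ p ∈ n.primeFactors with p ≤ ⌊L⌋₊, log p / p ≤ 2 * log L + log 4 :=
    calc _ ≤ ∑ p ∈ Nat.primesLE ⌊L⌋₊, log p / p :=
          sum_le_sum_of_subset_of_nonneg
            (fun p hp ↦ Nat.mem_primesLE.2
              ⟨(mem_filter.1 hp).2, Nat.prime_of_mem_primeFactors (mem_filter.1 hp).1⟩)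
            fun p _ _ ↦ div_nonneg (log_natCast_nonneg p) p.cast_nonneg
      _ ≤ 2 * log ⌊L⌋₊ + log 4 := sum_log_div_primesLE_le _
      _ ≤ 2 * log L + log 4 := by
          gcongr
          · exact Nat.cast_pos.2 (Nat.floor_pos.2 hn)
          · exact Nat.floor_le hL.le
  have htail : ∑ p ∈ n.primeFactors with ¬p ≤ ⌊L⌋₊, log p / p ≤ 1 :=
    calc _ ≤ (∑ p ∈ n.primeFactors with ¬p ≤ ⌊L⌋₊, log p) / L :=
          sum_log_div_self_le hL fun _ hp ↦
            ((Nat.floor_lt hL.le).1 (not_le.1 (mem_filter.1 hp).2)).le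
      _ ≤ L / L := by
          gcongr
          exact (sum_le_sum_of_subset_of_nonneg (filter_subset _ _)
            fun p _ _ ↦ log_natCast_nonneg p).trans (sum_log_primeFactors_le_log n)
      _ = 1 := div_self hL.ne'
  linarith

/-- For every integer `n ≥ 4`, the sum of `(log p)/p` over the distinct prime
divisors `p` of `n` is at most `5.25 · log log n`. -/
theorem sum_log_p_div_p_le (n : ℕ) (hn : 4 ≤ n) :
    ∑ p ∈ n.primeFactors, Real.log p / p ≤ 5.25 * Real.log (Real.log n) := by
  have hlogn : log 4 ≤ log n := log_le_log (by norm_num) (by exact_mod_cast hn)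
  rcases lt_or_ge (log n) (exp 1) with hsmall | hlarge
  · have hloglog : 1 - (log 4)⁻¹ ≤ log (log n) :=
      (one_sub_inv_le_log_of_pos (by positivity)).trans (log_le_log (by positivity) hlogn)
    have hinv : (log 4)⁻¹ < 0.74 := by
      rw [inv_lt_comm₀ (by positivity) (by norm_num), log_four_eq]
      linarith [log_two_gt_d9]
    linarith [sum_log_div_primeFactors_le_half_log n, exp_one_lt_d9, log_four_eq]
  · have hloglog : 1 ≤ log (log n) :=
      (le_log_iff_exp_le ((exp_pos 1).trans_le hlarge)).2 hlarge
    linarith [sum_log_div_primeFactors_le ((one_le_exp zero_le_one).trans hlarge), log_four_eq,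
      log_two_lt_d9]
end

section
/- Let N be a positive integer. The number of cyclic subgroups of order N of the group (ℤ/Nℤ) × (ℤ/Nℤ) equals ψ(N), and the natural action of GL₂(ℤ/Nℤ) on the set of cyclic subgroups of order N of (ℤ/Nℤ)² (by applying a matrix to each element of the subgroup) is transitive. -/
open Real Matrix

/-- `H` is a cyclic subgroup of order `N` of `(ℤ/Nℤ)²`. -/
def IsCyclicOfOrder (N : ℕ) (H : AddSubgroup (Fin 2 → ZMod N)) : Prop :=
  (∃ v, H = AddSubgroup.zmultiples v) ∧ Nat.card H = N

/-!
A vector of `(ℤ/Nℤ)²` has order `N` exactly when its coordinates generate the unit ideal, and a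
cyclic subgroup of order `N` has `φ(N)` generators. So the subgroups are counted by `J₂(N) / φ(N)`,
where `J₂(N)` is the number of vectors of order `N`: it is multiplicative by the Chinese remainder
theorem and equals `p^{2k} - p^{2k-2}` at `N = p^k`, so `J₂ = φ · ψ`. A vector `(a, b)` with
`x a + y b = 1` is the first column of `!![a, -y; b, x] ∈ SL₂(ℤ/Nℤ)`, which gives transitivity.
-/

theorem IsAddCyclic.card_nsmul_eq_zero {G : Type*} [AddGroup G] [IsAddCyclic G] [Finite G]
    {n : ℕ} (hn : n ∣ Nat.card G) : Nat.card {x : G // n • x = 0} = n := by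
  classical
  have := Fintype.ofFinite G
  have hn0 : n ≠ 0 := by rintro rfl; simp at hn
  have h := sum_card_addOrderOf_eq_card_nsmul_eq_zero (G := G) hn0
  rw [Finset.sum_congr rfl fun m hm => IsAddCyclic.card_addOrderOf_eq_totient
    ((Nat.dvd_of_mem_divisors hm).trans (Nat.card_eq_fintype_card (α := G) ▸ hn)),
    Nat.sum_totient] at h
  rw [Nat.card_eq_fintype_card, Fintype.card_subtype]
  convert h.symm

theorem addOrderOf_eq_prime_pow_succ_iff {G : Type*} [AddMonoid G] {p n : ℕ} [Fact p.Prime]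
    {x : G} (hx : p ^ (n + 1) • x = 0) : addOrderOf x = p ^ (n + 1) ↔ p ^ n • x ≠ 0 := by
  refine ⟨fun h hn => ?_, fun hn => addOrderOf_eq_prime_pow hn hx⟩
  have := h ▸ addOrderOf_dvd_of_nsmul_eq_zero hn
  exact absurd (Nat.pow_dvd_pow_iff_le_right (Fact.out : p.Prime).one_lt |>.mp this) (by omega)

theorem addOrderOf_prod_eq_mul_iff {A B : Type*} [AddMonoid A] [AddMonoid B] {a b : ℕ}
    (hab : a.Coprime b) (ha : ∀ x : A, a • x = 0) (hb : ∀ y : B, b • y = 0) (x : A) (y : B) :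
    addOrderOf (x, y) = a * b ↔ addOrderOf x = a ∧ addOrderOf y = b := by
  have hxa := addOrderOf_dvd_of_nsmul_eq_zero (ha x)
  have hyb := addOrderOf_dvd_of_nsmul_eq_zero (hb y)
  have hcop : (addOrderOf x).Coprime (addOrderOf y) :=
    (hab.coprime_dvd_left hxa).coprime_dvd_right hyb
  rw [Prod.addOrderOf, hcop.lcm_eq_mul]
  refine ⟨fun h => ⟨?_, ?_⟩, fun ⟨h₁, h₂⟩ => h₁ ▸ h₂ ▸ rfl⟩
  · refine Nat.dvd_antisymm hxa ((hab.coprime_dvd_right hyb).dvd_of_dvd_mul_right ?_)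
    exact h ▸ dvd_mul_right a b
  · refine Nat.dvd_antisymm hyb ((hab.symm.coprime_dvd_right hxa).dvd_of_dvd_mul_left ?_)
    exact h ▸ dvd_mul_left b a

theorem AddSubgroup.zmultiples_eq_iff {G : Type*} [AddGroup G] {H : AddSubgroup G} [Finite H]
    {g : G} : AddSubgroup.zmultiples g = H ↔ g ∈ H ∧ addOrderOf g = Nat.card H := by
  refine ⟨fun h => h ▸ ⟨AddSubgroup.mem_zmultiples g, (Nat.card_zmultiples g).symm⟩, ?_⟩
  rintro ⟨hg, hord⟩
  exact AddSubgroup.eq_of_le_of_card_ge (AddSubgroup.zmultiples_le_of_mem hg)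
    (by rw [Nat.card_zmultiples, hord])

theorem card_zmultiples_eq_zmultiples {G : Type*} [AddGroup G] [Finite G] (g₀ : G) :
    Nat.card {g : G // AddSubgroup.zmultiples g = AddSubgroup.zmultiples g₀} =
      (addOrderOf g₀).totient := by
  set K := AddSubgroup.zmultiples g₀
  have e : {g : G // AddSubgroup.zmultiples g = K} ≃ {h : K // addOrderOf h = Nat.card K} :=
    (Equiv.subtypeEquivRight fun g => by rw [AddSubgroup.zmultiples_eq_iff]).trans <|
      (Equiv.subtypeSubtypeEquivSubtypeInter (· ∈ K) (addOrderOf · = Nat.card K)).symm.trans <|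
        Equiv.subtypeEquivRight fun h => by rw [AddSubgroup.addOrderOf_coe]
  have := Fintype.ofFinite K
  rw [Nat.card_congr e, ← Nat.card_zmultiples, Nat.card_eq_fintype_card, Fintype.card_subtype,
    Nat.card_eq_fintype_card]
  exact IsAddCyclic.card_addOrderOf_eq_totient dvd_rfl

theorem card_addOrderOf_eq_card_cyclic_mul_totient {G : Type*} [AddGroup G] [Finite G] (n : ℕ) :
    Nat.card {g : G // addOrderOf g = n} =
      Nat.card {H : AddSubgroup G // (∃ g, H = AddSubgroup.zmultiples g) ∧ Nat.card H = n} *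
        n.totient := by
  set S := {H : AddSubgroup G // (∃ g, H = AddSubgroup.zmultiples g) ∧ Nat.card H = n}
  let Φ : {g : G // addOrderOf g = n} → S := fun g =>
    ⟨AddSubgroup.zmultiples g, ⟨g, rfl⟩, by rw [Nat.card_zmultiples, g.2]⟩
  have card_fiber (H : S) : Nat.card {g // Φ g = H} = n.totient := by
    obtain ⟨_, ⟨g₀, rfl⟩, hcard⟩ := H
    have hord : addOrderOf g₀ = n := Nat.card_zmultiples g₀ ▸ hcard
    have e : {g // Φ g = ⟨_, ⟨g₀, rfl⟩, hcard⟩} ≃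
        {g : G // AddSubgroup.zmultiples g = AddSubgroup.zmultiples g₀} :=
      (Equiv.subtypeEquivRight fun g => Subtype.ext_iff).trans <|
        Equiv.subtypeSubtypeEquivSubtype (p := (addOrderOf · = n))
          (q := (AddSubgroup.zmultiples · = AddSubgroup.zmultiples g₀)) fun h => by
            rw [← Nat.card_zmultiples, h, Nat.card_zmultiples, hord]
    rw [Nat.card_congr e, card_zmultiples_eq_zmultiples, hord]
  have := Fintype.ofFinite S
  rw [Nat.card_congr (Equiv.sigmaFiberEquiv Φ).symm, Nat.card_sigma,
    Finset.sum_congr rfl fun H _ => card_fiber H, Finset.sum_const, smul_eq_mul,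
    Finset.card_univ, Nat.card_eq_fintype_card]

namespace ZMod

variable {ι : Type*}

theorem card_pi_addOrderOf_eq_mul {a b : ℕ} (hab : a.Coprime b) :
    Nat.card {v : ι → ZMod (a * b) // addOrderOf v = a * b} =
      Nat.card {v : ι → ZMod a // addOrderOf v = a} *
        Nat.card {v : ι → ZMod b // addOrderOf v = b} := by
  let E : (ι → ZMod (a * b)) ≃+ (ι → ZMod a) × (ι → ZMod b) :=
    { (Equiv.piCongrRight fun _ => (chineseRemainder hab).toEquiv).trans
        (Equiv.arrowProdEquivProdArrow _ _ _) with
      map_add' := fun v w => by ext <;> simp }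
  rw [← Nat.card_prod, Nat.card_congr (Equiv.subtypeProdEquivProd
    (p := fun x => addOrderOf x = a) (q := fun y => addOrderOf y = b)).symm]
  refine Nat.card_congr (E.toEquiv.subtypeEquiv fun v => ?_)
  show _ ↔ addOrderOf (E v).1 = a ∧ addOrderOf (E v).2 = b
  rw [← addOrderOf_prod_eq_mul_iff hab (ZModModule.char_nsmul_eq_zero a)
    (ZModModule.char_nsmul_eq_zero b), Prod.mk.eta, E.addOrderOf_eq]

theorem card_pi_addOrderOf_eq_prime_pow_add [Fintype ι] {p k : ℕ} [Fact p.Prime] :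
    Nat.card {v : ι → ZMod (p ^ (k + 1)) // addOrderOf v = p ^ (k + 1)} +
      (p ^ k) ^ Fintype.card ι = (p ^ (k + 1)) ^ Fintype.card ι := by
  have h_order (v : ι → ZMod (p ^ (k + 1))) : addOrderOf v = p ^ (k + 1) ↔ ¬ p ^ k • v = 0 :=
    addOrderOf_eq_prime_pow_succ_iff (ZModModule.char_nsmul_eq_zero _ v)
  have h_kernel :
      Nat.card {v : ι → ZMod (p ^ (k + 1)) // p ^ k • v = 0} = (p ^ k) ^ Fintype.card ι := by
    have e : {v : ι → ZMod (p ^ (k + 1)) // p ^ k • v = 0} ≃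
        (ι → {x : ZMod (p ^ (k + 1)) // p ^ k • x = 0}) :=
      (Equiv.subtypeEquivRight fun v => funext_iff).trans
        (Equiv.subtypePiEquivPi (p := fun _ x => p ^ k • x = 0))
    rw [Nat.card_congr e, Nat.card_pi, Finset.prod_const, Finset.card_univ]
    congr 1
    exact IsAddCyclic.card_nsmul_eq_zero (by rw [Nat.card_zmod]; exact pow_dvd_pow p k.le_succ)
  rw [Nat.card_congr (Equiv.subtypeEquivRight h_order), ← h_kernel, add_comm,
    ← Nat.card_sum, Nat.card_congr (Equiv.sumCompl _), Nat.card_fun, Nat.card_zmod,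
    Nat.card_eq_fintype_card]

theorem eq_zero_of_smul_eq_zero_of_addOrderOf_eq {N : ℕ} {M : Type*} [AddCommGroup M]
    [Module (ZMod N) M] {x : M} (hx : addOrderOf x = N) {t : ZMod N} (ht : t • x = 0) :
    t = 0 := by
  rw [← intCast_zmod_cast t] at ht ⊢
  rw [Int.cast_smul_eq_zsmul] at ht
  rw [intCast_zmod_eq_zero_iff_dvd]
  have h := addOrderOf_dvd_iff_zsmul_eq_zero.2 ht
  rwa [hx] at h

theorem span_range_eq_top_of_addOrderOf_eq {N : ℕ} [NeZero N]
    {v : ι → ZMod N} (hv : addOrderOf v = N) : Ideal.span (Set.range v) = ⊤ := by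
  have : IsPrincipalIdealRing (ZMod N) :=
    .of_surjective (Int.castRingHom (ZMod N)) intCast_surjective
  obtain ⟨g, hg⟩ := (IsPrincipalIdealRing.principal (Ideal.span (Set.range v))).principal
  rw [hg, Ideal.submodule_span_eq, Ideal.span_singleton_eq_top,
    isUnit_iff_mem_nonZeroDivisors_of_finite, mem_nonZeroDivisors_iff_right]
  -- a generator of the ideal is a non-zero-divisor, hence a unit of the finite ring `ZMod N`
  refine fun t ht => eq_zero_of_smul_eq_zero_of_addOrderOf_eq hv (funext fun i => ?_)
  have hvi : v i ∈ Ideal.span {g} := by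
    rw [← Ideal.submodule_span_eq, ← hg]
    exact Ideal.subset_span ⟨i, rfl⟩
  obtain ⟨c, hc⟩ := Ideal.mem_span_singleton'.1 hvi
  simp [← hc, mul_left_comm t, ht]

end ZMod

theorem dedekindPsi_mul {a b : ℕ} (hab : a.Coprime b) :
    dedekindPsi (a * b) = dedekindPsi a * dedekindPsi b := by
  rw [dedekindPsi, dedekindPsi, dedekindPsi, hab.primeFactors_mul,
    Finset.prod_union hab.disjoint_primeFactors]
  push_cast
  ring

theorem dedekindPsi_prime_pow_succ {p : ℕ} (hp : p.Prime) (k : ℕ) :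
    dedekindPsi (p ^ (k + 1)) = p ^ (k + 1) + p ^ k := by
  have hp0 : (p : ℝ) ≠ 0 := by exact_mod_cast hp.ne_zero
  rw [dedekindPsi, Nat.primeFactors_prime_pow k.succ_ne_zero hp, Finset.prod_singleton]
  field_simp
  push_cast
  ring

theorem card_fin_two_addOrderOf_eq_totient_mul_dedekindPsi {N : ℕ} (hN : 0 < N) :
    (Nat.card {v : Fin 2 → ZMod N // addOrderOf v = N} : ℝ) = N.totient * dedekindPsi N := by
  induction N using Nat.recOnPosPrimePosCoprime with
  | zero => exact absurd hN (lt_irrefl 0)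
  | one => simp [Subsingleton.addOrderOf_eq, dedekindPsi]
  | prime_pow p k hp hk =>
    obtain ⟨k, rfl⟩ := Nat.exists_eq_add_one_of_ne_zero hk.ne'
    have : Fact p.Prime := ⟨hp⟩
    have h := ZMod.card_pi_addOrderOf_eq_prime_pow_add (ι := Fin 2) (p := p) (k := k)
    rw [Fintype.card_fin] at h
    have h' : (Nat.card {v : Fin 2 → ZMod (p ^ (k + 1)) // addOrderOf v = p ^ (k + 1)} : ℝ) =
        ((p : ℝ) ^ (k + 1)) ^ 2 - ((p : ℝ) ^ k) ^ 2 := by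
      rw [eq_sub_iff_add_eq]; exact_mod_cast h
    rw [h', Nat.totient_prime_pow_succ hp, dedekindPsi_prime_pow_succ hp]
    push_cast [Nat.cast_sub hp.one_le]
    ring
  | coprime a b ha hb hab iha ihb =>
    rw [ZMod.card_pi_addOrderOf_eq_mul hab, Nat.totient_mul hab, dedekindPsi_mul hab]
    push_cast
    rw [iha (by omega), ihb (by omega)]
    ring

theorem Matrix.exists_GL_mulVec_single_eq {R : Type*} [CommRing R] {v : Fin 2 → R}
    (hv : Ideal.span (Set.range v) = ⊤) :
    ∃ g : GL (Fin 2) R, (g : Matrix (Fin 2) (Fin 2) R) *ᵥ Pi.single 0 1 = v := by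
  obtain ⟨c, hc⟩ := Ideal.mem_span_range_iff_exists_fun.1 (hv ▸ Submodule.mem_top (x := (1 : R)))
  rw [Fin.sum_univ_two] at hc
  have hdet : IsUnit (!![v 0, -c 1; v 1, c 0] : Matrix (Fin 2) (Fin 2) R).det := by
    rw [det_fin_two_of, show v 0 * c 0 - -c 1 * v 1 = 1 by linear_combination hc]
    exact isUnit_one
  refine ⟨((Matrix.isUnit_iff_isUnit_det _).2 hdet).unit, ?_⟩
  rw [IsUnit.unit_spec, mulVec_single_one]
  ext i
  fin_cases i <;> simp

theorem exists_GL_map_zmultiples_eq {N : ℕ} [NeZero N] {v w : Fin 2 → ZMod N}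
    (hv : addOrderOf v = N) (hw : addOrderOf w = N) :
    ∃ g : GL (Fin 2) (ZMod N), (AddSubgroup.zmultiples v).map
      (mulVecLin (g : Matrix (Fin 2) (Fin 2) (ZMod N))).toAddMonoidHom =
        AddSubgroup.zmultiples w := by
  obtain ⟨g, hg⟩ := exists_GL_mulVec_single_eq (ZMod.span_range_eq_top_of_addOrderOf_eq hv)
  obtain ⟨h, hh⟩ := exists_GL_mulVec_single_eq (ZMod.span_range_eq_top_of_addOrderOf_eq hw)
  refine ⟨h * g⁻¹, ?_⟩
  rw [AddMonoidHom.map_zmultiples]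
  congr 1
  show ((h * g⁻¹ : GL (Fin 2) (ZMod N)) : Matrix (Fin 2) (Fin 2) (ZMod N)) *ᵥ v = w
  rw [← hg, ← hh, mulVec_mulVec, ← Units.val_mul, inv_mul_cancel_right]

/-- There are exactly `ψ(N)` cyclic subgroups of order `N` of `(ℤ/Nℤ)²`, and
`GL₂(ℤ/Nℤ)` acts transitively on them. -/
theorem card_cyclic_subgroups_and_transitive (N : ℕ) (hN : 0 < N) :
    ((Nat.card {H : AddSubgroup (Fin 2 → ZMod N) // IsCyclicOfOrder N H} : ℕ) : ℝ)
        = dedekindPsi N ∧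
    ∀ H₁ H₂ : AddSubgroup (Fin 2 → ZMod N),
      IsCyclicOfOrder N H₁ → IsCyclicOfOrder N H₂ →
      ∃ g : GL (Fin 2) (ZMod N),
        H₂ = H₁.map
          (Matrix.mulVecLin (g : Matrix (Fin 2) (Fin 2) (ZMod N))).toAddMonoidHom := by
  have : NeZero N := ⟨hN.ne'⟩
  refine ⟨?_, ?_⟩
  · have hcount := card_fin_two_addOrderOf_eq_totient_mul_dedekindPsi hN
    rw [card_addOrderOf_eq_card_cyclic_mul_totient, Nat.cast_mul, mul_comm] at hcount
    exact mul_left_cancel₀ (by exact_mod_cast (Nat.totient_pos.2 hN).ne') hcount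
  · rintro _ _ ⟨⟨v, rfl⟩, hv⟩ ⟨⟨w, rfl⟩, hw⟩
    rw [Nat.card_zmultiples] at hv hw
    obtain ⟨g, hg⟩ := exists_GL_map_zmultiples_eq hv hw
    exact ⟨g, hg.symm⟩
end

section
/- Let N be a positive integer, let G be a subgroup of GL₂(ℤ/Nℤ), let Φ be a cyclic subgroup of order N of (ℤ/Nℤ)², and let B = #{gΦ : g ∈ G} be the cardinality of the orbit of Φ under the action of G on subgroups of (ℤ/Nℤ)². Then ψ(N)/B ≤ [GL₂(ℤ/Nℤ) : G], i.e. ψ(N) ≤ B · [GL₂(ℤ/Nℤ) : G]. -/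
open Real Matrix

/-!
The group `GL₂(ℤ/Nℤ)` acts transitively on the vectors of additive order `N` in `(ℤ/Nℤ)²`
(these are the unimodular vectors), so its orbit of `Φ` is the set of all cyclic subgroups of
order `N`. Each such subgroup has `φ(N)` generators, and the vectors of order `N` number
`J₂(N) = ψ(N) φ(N)` (Jordan's totient, computed prime power by prime power via the Chinese
remainder theorem), so this orbit has `ψ(N)` elements. Finally, by orbit–stabilizer,
`|GL₂ · Φ| = [GL₂ : Stab Φ] ≤ [GL₂ : G ⊓ Stab Φ] = [GL₂ : G] · [G : G ⊓ Stab Φ] = [GL₂ : G] · B`.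
-/

open Pointwise MulAction Finset

theorem MulAction.ncard_orbit_le_index_mul_ncard_orbit {α β : Type*} [Group α] [MulAction α β]
    (H : Subgroup α) [H.FiniteIndex] (b : β) :
    (orbit α b).ncard ≤ H.index * (orbit H b).ncard := by
  have hstab : stabilizer H b = (stabilizer α b).subgroupOf H := rfl
  rw [← index_stabilizer, ← index_stabilizer, hstab, ← Subgroup.relIndex, mul_comm]
  by_cases h0 : (stabilizer α b).relIndex H = 0
  · rw [← Subgroup.relIndex_top_right, Subgroup.relIndex_eq_zero_of_le_right le_top h0]
    exact Nat.zero_le _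
  · have : (stabilizer α b ⊓ H).FiniteIndex := ⟨by
      rw [← Subgroup.relIndex_mul_index inf_le_right, Subgroup.inf_relIndex_right]
      exact mul_ne_zero h0 Subgroup.FiniteIndex.index_ne_zero⟩
    rw [← Subgroup.inf_relIndex_right, Subgroup.relIndex_mul_index inf_le_right]
    exact Subgroup.index_antitone inf_le_left

theorem card_addOrderOf_eq_le_totient_mul_ncard {A : Type*} [AddGroup A] [Finite A] {n : ℕ}
    {S : Set (AddSubgroup A)} (hS : ∀ a : A, addOrderOf a = n → AddSubgroup.zmultiples a ∈ S) :
    Nat.card {a : A // addOrderOf a = n} ≤ n.totient * S.ncard := by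
  classical
  have := Fintype.ofFinite A
  rw [Nat.card_eq_fintype_card, Fintype.card_subtype, Set.ncard_eq_toFinset_card']
  refine card_le_mul_card_image_of_maps_to (f := AddSubgroup.zmultiples)
    (fun a ha => by simpa using hS a (by simpa using ha)) _ fun H _ => ?_
  set fibre := {a ∈ univ.filter (fun a : A => addOrderOf a = n) | AddSubgroup.zmultiples a = H}
  rcases fibre.eq_empty_or_nonempty with h | ⟨a₀, ha₀⟩
  · simp [h]
  obtain ⟨ha₀n, rfl⟩ : addOrderOf a₀ = n ∧ AddSubgroup.zmultiples a₀ = H := by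
    simpa [fibre] using ha₀
  -- the fibre consists of generators of the cyclic group `zmultiples a₀` of order `n`
  have hsub : fibre ⊆ (univ.filter fun x : AddSubgroup.zmultiples a₀ => addOrderOf x = n).map
      (Function.Embedding.subtype _) := by
    intro a ha
    simp only [fibre, mem_filter, mem_univ, true_and] at ha
    have hmem : a ∈ AddSubgroup.zmultiples a₀ := ha.2 ▸ AddSubgroup.mem_zmultiples a
    exact mem_map.2 ⟨⟨a, hmem⟩, by simpa using ha.1, rfl⟩
  refine (card_le_card hsub).trans ?_
  rw [card_map, IsAddCyclic.card_addOrderOf_eq_totient]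
  rw [← Nat.card_eq_fintype_card, Nat.card_zmultiples, ha₀n]

theorem ZMod.addOrderOf_pi_dvd {ι : Type*} {n : ℕ} (v : ι → ZMod n) : addOrderOf v ∣ n :=
  addOrderOf_dvd_of_nsmul_eq_zero (by ext; simp)

section PrimePower

variable {p k : ℕ}

theorem ZMod.prime_pow_nsmul_eq_zero_iff (hp : p.Prime) (x : ZMod (p ^ (k + 1))) :
    p ^ k • x = 0 ↔ ¬IsUnit x := by
  have : NeZero (p ^ (k + 1)) := ⟨(pow_pos hp.pos _).ne'⟩
  rw [← ZMod.natCast_zmod_val x]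
  generalize x.val = a
  rw [ZMod.isUnit_iff_coprime, Nat.coprime_pow_right_iff k.succ_pos, Nat.coprime_comm,
    hp.coprime_iff_not_dvd, not_not, nsmul_eq_mul, ← Nat.cast_mul, ZMod.natCast_eq_zero_iff,
    pow_succ, Nat.mul_dvd_mul_iff_left (pow_pos hp.pos k)]

theorem ZMod.card_nonunits_prime_pow (hp : p.Prime) :
    Nat.card {x : ZMod (p ^ (k + 1)) // ¬IsUnit x} = p ^ k := by
  classical
  have : NeZero (p ^ (k + 1)) := ⟨(pow_pos hp.pos _).ne'⟩
  have hunits : Fintype.card {x : ZMod (p ^ (k + 1)) // IsUnit x} = p ^ k * (p - 1) := by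
    rw [← Nat.totient_prime_pow_succ hp, ← ZMod.card_units_eq_totient, ← Nat.card_eq_fintype_card,
      ← Nat.card_eq_fintype_card, ← Nat.card_range_of_injective Units.val_injective]
    rfl
  rw [Nat.card_eq_fintype_card, Fintype.card_subtype_compl, hunits, ZMod.card, pow_succ,
    ← Nat.mul_sub, Nat.sub_sub_self hp.one_le, mul_one]

variable {ι : Type*}

theorem ZMod.addOrderOf_pi_eq_prime_pow_iff (hp : p.Prime) (v : ι → ZMod (p ^ (k + 1))) :
    addOrderOf v = p ^ (k + 1) ↔ ∃ i, IsUnit (v i) := by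
  have : Fact p.Prime := ⟨hp⟩
  have hnsmul : p ^ k • v = 0 ↔ ∀ i, ¬IsUnit (v i) := by
    simp only [funext_iff, Pi.smul_apply, Pi.zero_apply, ZMod.prime_pow_nsmul_eq_zero_iff hp]
  constructor
  · intro h
    by_contra! hv
    have := addOrderOf_dvd_of_nsmul_eq_zero (hnsmul.2 hv)
    rw [h] at this
    exact absurd (Nat.le_of_dvd (pow_pos hp.pos k) this) (by simp [Nat.pow_lt_pow_right hp.one_lt])
  · rintro ⟨i, hi⟩
    exact addOrderOf_eq_prime_pow (fun h => hnsmul.1 h i hi)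
      (addOrderOf_dvd_iff_nsmul_eq_zero.1 (ZMod.addOrderOf_pi_dvd v))

theorem ZMod.card_pi_addOrderOf_eq_prime_pow_add_s6 [Fintype ι] (hp : p.Prime) :
    Nat.card {v : ι → ZMod (p ^ (k + 1)) // addOrderOf v = p ^ (k + 1)} + (p ^ k) ^ Fintype.card ι
      = (p ^ (k + 1)) ^ Fintype.card ι := by
  classical
  have : NeZero (p ^ (k + 1)) := ⟨(pow_pos hp.pos _).ne'⟩
  have hcompl : {v : ι → ZMod (p ^ (k + 1)) // ¬addOrderOf v = p ^ (k + 1)}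
      ≃ (ι → {x : ZMod (p ^ (k + 1)) // ¬IsUnit x}) :=
    (Equiv.subtypeEquivRight fun v => by
      rw [ZMod.addOrderOf_pi_eq_prime_pow_iff hp, not_exists]).trans Equiv.subtypePiEquivPi
  rw [← ZMod.card_nonunits_prime_pow (k := k) hp, Nat.card_eq_fintype_card (α := {x // ¬IsUnit x}),
    ← Fintype.card_fun, ← Fintype.card_congr hcompl, Nat.card_eq_fintype_card,
    Fintype.card_subtype_compl, Nat.add_sub_of_le (Fintype.card_subtype_le _), Fintype.card_fun,
    ZMod.card]

end PrimePower

theorem Nat.Coprime.lcm_eq_mul_iff {a b d e : ℕ} (hab : a.Coprime b) (ha : 0 < a) (hb : 0 < b)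
    (hd : d ∣ a) (he : e ∣ b) : d.lcm e = a * b ↔ d = a ∧ e = b := by
  refine ⟨fun h => ?_, fun ⟨hda, heb⟩ => by rw [hda, heb, hab.lcm_eq_mul]⟩
  rw [((hab.coprime_dvd_left hd).coprime_dvd_right he).lcm_eq_mul] at h
  have hda := Nat.le_of_dvd ha hd
  have heb := Nat.le_of_dvd hb he
  constructor <;> nlinarith

theorem ZMod.card_pi_addOrderOf_eq_mul_s6 {ι : Type*} {a b : ℕ} (hab : a.Coprime b) (ha : 0 < a)
    (hb : 0 < b) :
    Nat.card {v : ι → ZMod (a * b) // addOrderOf v = a * b}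
      = Nat.card {v : ι → ZMod a // addOrderOf v = a}
        * Nat.card {v : ι → ZMod b // addOrderOf v = b} := by
  let crt : (ι → ZMod (a * b)) ≃+ (ι → ZMod a) × (ι → ZMod b) :=
    (AddEquiv.piCongrRight fun _ => (ZMod.chineseRemainder hab).toAddEquiv).trans
      { Equiv.arrowProdEquivProdArrow _ _ _ with map_add' := fun _ _ => rfl }
  rw [← Nat.card_prod, ← Nat.card_congr Equiv.subtypeProdEquivProd,
    Nat.card_congr (crt.toEquiv.subtypeEquiv fun v => ?_)]
  rw [← crt.addOrderOf_eq v, Prod.addOrderOf]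
  exact hab.lcm_eq_mul_iff ha hb (ZMod.addOrderOf_pi_dvd _) (ZMod.addOrderOf_pi_dvd _)

noncomputable def jordanTotient (k N : ℕ) : ℝ :=
  (N : ℝ) ^ k * ∏ p ∈ N.primeFactors, (1 - ((p : ℝ) ^ k)⁻¹)

theorem jordanTotient_mul {k a b : ℕ} (hab : a.Coprime b) :
    jordanTotient k (a * b) = jordanTotient k a * jordanTotient k b := by
  simp only [jordanTotient, hab.primeFactors_mul, prod_union hab.disjoint_primeFactors]
  push_cast
  ring

theorem jordanTotient_prime_pow_succ {m p k : ℕ} (hp : p.Prime) :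
    jordanTotient m (p ^ (k + 1)) = ((p : ℝ) ^ (k + 1)) ^ m - ((p : ℝ) ^ k) ^ m := by
  have hp0 : (p : ℝ) ≠ 0 := by exact_mod_cast hp.ne_zero
  rw [jordanTotient, Nat.primeFactors_prime_pow k.succ_ne_zero hp, prod_singleton]
  push_cast
  field_simp
  ring

theorem jordanTotient_two (N : ℕ) : jordanTotient 2 N = dedekindPsi N * N.totient := by
  have htot : (N.totient : ℝ) = N * ∏ p ∈ N.primeFactors, (1 - (p : ℝ)⁻¹) := by
    have h := congrArg (Rat.cast : ℚ → ℝ) (Nat.totient_eq_mul_prod_factors N)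
    push_cast at h
    exact h
  rw [jordanTotient, dedekindPsi, htot, mul_mul_mul_comm, ← sq, ← prod_mul_distrib]
  congr 1
  refine prod_congr rfl fun p _ => ?_
  ring

theorem ZMod.card_pi_addOrderOf_eq_self {ι : Type*} [Fintype ι] {N : ℕ} (hN : N ≠ 0) :
    (Nat.card {v : ι → ZMod N // addOrderOf v = N} : ℝ) = jordanTotient (Fintype.card ι) N := by
  induction N using Nat.recOnPosPrimePosCoprime with
  | prime_pow p k hp hk =>
    obtain ⟨k, rfl⟩ := Nat.exists_eq_add_one_of_ne_zero hk.ne'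
    rw [jordanTotient_prime_pow_succ hp, eq_sub_iff_add_eq]
    exact_mod_cast ZMod.card_pi_addOrderOf_eq_prime_pow_add_s6 hp
  | zero => exact absurd rfl hN
  | one => simp [jordanTotient, Subsingleton.elim _ (0 : ι → ZMod 1)]
  | coprime a b ha hb hab iha ihb =>
    rw [ZMod.card_pi_addOrderOf_eq_mul_s6 hab (by omega) (by omega), Nat.cast_mul, iha (by omega),
      ihb (by omega), jordanTotient_mul hab]

theorem Matrix.GeneralLinearGroup.exists_smul_single_eq {R : Type*} [CommRing R] {v : Fin 2 → R}
    (hv : Ideal.span {v 0, v 1} = ⊤) : ∃ g : GL (Fin 2) R, g • Pi.single 0 1 = v := by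
  obtain ⟨x, y, hxy⟩ := Ideal.mem_span_pair.1 (hv ▸ Submodule.mem_top : (1 : R) ∈ _)
  let M : Matrix (Fin 2) (Fin 2) R := !![v 0, -y; v 1, x]
  have hdet : M.det = 1 := by
    rw [Matrix.det_fin_two_of, ← hxy]
    ring
  refine ⟨Matrix.nonsingInvUnit M (hdet ▸ isUnit_one), ?_⟩
  ext i
  fin_cases i <;> simp [M, Units.smul_def, Matrix.nonsingInvUnit]

theorem ZMod.span_eq_top_of_addOrderOf_eq {N : ℕ} [NeZero N] {v : Fin 2 → ZMod N}
    (hv : addOrderOf v = N) : Ideal.span {v 0, v 1} = ⊤ := by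
  set a := (v 0).val
  set b := (v 1).val
  have hcop : (a.gcd b).Coprime N := by
    set d := (a.gcd b).gcd N
    have hdN : d ∣ N := Nat.gcd_dvd_right _ _
    have hkill : (N / d) • v = 0 := by
      have hd : ∀ i, d ∣ (v i).val := fun i => by
        fin_cases i
        exacts [(Nat.gcd_dvd_left _ _).trans (Nat.gcd_dvd_left a b),
          (Nat.gcd_dvd_left _ _).trans (Nat.gcd_dvd_right a b)]
      ext i
      obtain ⟨c, hc⟩ := hd i
      rw [Pi.smul_apply, ← ZMod.natCast_zmod_val (v i), hc, nsmul_eq_mul, ← Nat.cast_mul,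
        ← mul_assoc, Nat.div_mul_cancel hdN, Nat.cast_mul, ZMod.natCast_self, zero_mul,
        Pi.zero_apply]
    have hNd : N ∣ N / d := by simpa only [hv] using addOrderOf_dvd_of_nsmul_eq_zero hkill
    exact (Nat.div_eq_self.1 (Nat.dvd_antisymm (Nat.div_dvd_of_dvd hdN) hNd)).resolve_left
      (NeZero.ne N)
  apply Ideal.eq_top_of_isUnit_mem _ _ ((ZMod.isUnit_iff_coprime _ _).2 hcop)
  refine Ideal.mem_span_pair.2 ⟨(a.gcdA b : ZMod N), (a.gcdB b : ZMod N), ?_⟩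
  have := congrArg (Int.cast : ℤ → ZMod N) (Nat.gcd_eq_gcd_ab a b)
  push_cast at this
  rw [this, ZMod.natCast_zmod_val, ZMod.natCast_zmod_val]
  ring

theorem Matrix.GeneralLinearGroup.smul_zmultiples {n R : Type*} [Fintype n] [DecidableEq n]
    [CommRing R] (g : GL n R) (v : n → R) :
    g • AddSubgroup.zmultiples v = AddSubgroup.zmultiples (g • v) :=
  AddMonoidHom.map_zmultiples (Matrix.mulVecLin (g : Matrix n n R)).toAddMonoidHom v

theorem zmultiples_mem_orbit_GL_of_addOrderOf_eq {N : ℕ} [NeZero N] {v w : Fin 2 → ZMod N}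
    (hv : addOrderOf v = N) (hw : addOrderOf w = N) :
    AddSubgroup.zmultiples w ∈ orbit (GL (Fin 2) (ZMod N)) (AddSubgroup.zmultiples v) := by
  obtain ⟨g, rfl⟩ :=
    Matrix.GeneralLinearGroup.exists_smul_single_eq (ZMod.span_eq_top_of_addOrderOf_eq hv)
  obtain ⟨h, rfl⟩ :=
    Matrix.GeneralLinearGroup.exists_smul_single_eq (ZMod.span_eq_top_of_addOrderOf_eq hw)
  refine ⟨h * g⁻¹, ?_⟩
  dsimp only
  rw [Matrix.GeneralLinearGroup.smul_zmultiples, mul_smul, inv_smul_smul]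

theorem dedekindPsi_le_ncard_orbit {N : ℕ} [NeZero N] {v : Fin 2 → ZMod N}
    (hv : addOrderOf v = N) :
    dedekindPsi N ≤ (orbit (GL (Fin 2) (ZMod N)) (AddSubgroup.zmultiples v)).ncard := by
  have hcount := ZMod.card_pi_addOrderOf_eq_self (ι := Fin 2) (NeZero.ne N)
  rw [Fintype.card_fin, jordanTotient_two] at hcount
  have hfibres := card_addOrderOf_eq_le_totient_mul_ncard
    fun w hw => zmultiples_mem_orbit_GL_of_addOrderOf_eq hv hw
  have htot : (0 : ℝ) < N.totient := by exact_mod_cast Nat.totient_pos.2 (NeZero.pos N)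
  refine le_of_mul_le_mul_right ?_ htot
  calc dedekindPsi N * N.totient = Nat.card {w : Fin 2 → ZMod N // addOrderOf w = N} :=
        hcount.symm
    _ ≤ N.totient * (orbit (GL (Fin 2) (ZMod N)) (AddSubgroup.zmultiples v)).ncard := by
        exact_mod_cast hfibres
    _ = _ := mul_comm _ _

/-- If `Φ` is a cyclic subgroup of order `N` of `(ℤ/Nℤ)²` and `B` is the size of
its orbit under a subgroup `G ≤ GL₂(ℤ/Nℤ)`, then `ψ(N) ≤ B · [GL₂(ℤ/Nℤ) : G]`. -/
theorem psi_le_orbit_mul_index (N : ℕ) (hN : 0 < N)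
    (G : Subgroup (GL (Fin 2) (ZMod N)))
    (Φ : AddSubgroup (Fin 2 → ZMod N))
    (hcyc : ∃ v, Φ = AddSubgroup.zmultiples v)
    (hord : Nat.card Φ = N)
    (B : ℕ)
    (hB : B = Nat.card {H : AddSubgroup (Fin 2 → ZMod N) //
        ∃ g ∈ G, H = Φ.map
          (Matrix.mulVecLin ((g : GL (Fin 2) (ZMod N)) :
            Matrix (Fin 2) (Fin 2) (ZMod N))).toAddMonoidHom}) :
    dedekindPsi N ≤ (B : ℝ) * (G.index : ℝ) := by
  have : NeZero N := ⟨hN.ne'⟩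
  obtain ⟨v, rfl⟩ := hcyc
  rw [Nat.card_zmultiples] at hord
  -- `Φ.map (mulVecLin g)` is by definition the pointwise action `g • Φ`
  have hB' : B = (orbit G (AddSubgroup.zmultiples v)).ncard :=
    hB.trans <| (Nat.card_congr <| Equiv.subtypeEquivRight fun _ =>
      ⟨fun ⟨g, hg, hH⟩ => ⟨⟨g, hg⟩, hH.symm⟩, fun ⟨g, hg⟩ => ⟨g, g.2, hg.symm⟩⟩).trans
      (Nat.card_coe_set_eq _)
  calc dedekindPsi N ≤ (orbit (GL (Fin 2) (ZMod N)) (AddSubgroup.zmultiples v)).ncard :=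
        dedekindPsi_le_ncard_orbit hord
    _ ≤ G.index * B := by
        rw [hB']
        exact_mod_cast ncard_orbit_le_index_mul_ncard_orbit G _
    _ = B * G.index := mul_comm _ _
end

section
/- Let ξ ∈ 𝓕̄, let y > 0, and let ε be a real number with 0 < ε ≤ (Im(ξ)/(100|ξ|³))². Then for each sign ν ∈ {±1}, the number of integer pairs (a,c) ∈ ℤ² satisfying |a² + 2ν|Re(ξ)|ac + |ξ|²c² − Im(ξ)/y| ≤ 50|ξ|³·ε^{1/2}/y is at most 16π·(√(2·Im(ξ)) + √y)/√y + 100π·|ξ|³·ε^{1/2}/(y·Im(ξ)). -/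
/-!
Since `ν² = 1`, completing the square gives
`a² + 2ν|Re ξ|ac + |ξ|²c² = (a + ν|Re ξ|c)² + (Im ξ)²c²`, so with `T = Im ξ / y` and
`δ = 50|ξ|³√ε / y ≤ T` the points satisfy `|(a + xc)² + v²c² - T| ≤ δ` with `v = Im ξ ≥ 1/2`.
Only the rows `|c| ≤ √(T + δ) / v` occur, and in row `c` the admissible `a` fill two integer
intervals with at most `2(√(T + δ - v²c²) - √(T - δ - v²c²)) + 2` points in total. The square
roots decrease in `|c|`, so their sums over `c` are within `√K` of `∫₀^∞ √(K - v²t²) dt = πK/(4v)`;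
this yields the area term `2πδ/v`, and the endpoints and the number of rows contribute
`O((1 + 1/v)√T)`.
-/

open Real

open Finset

lemma Set.finite_and_ncard_le_sum_of_fibers {α β : Type*} (S : Set (α × β)) (F : Finset β)
    (hF : ∀ p ∈ S, p.2 ∈ F) (f : β → ℝ)
    (hfib : ∀ b ∈ F, {a | (a, b) ∈ S}.Finite ∧ ({a | (a, b) ∈ S}.ncard : ℝ) ≤ f b) :
    S.Finite ∧ (S.ncard : ℝ) ≤ ∑ b ∈ F, f b := by
  have hS : S = ⋃ b ∈ F, (·, b) '' {a | (a, b) ∈ S} := by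
    ext ⟨a, b⟩
    simp only [Set.mem_iUnion, Set.mem_image, Prod.mk.injEq, exists_prop]
    exact ⟨fun h => ⟨b, hF _ h, a, h, rfl, rfl⟩,
      by rintro ⟨_, _, _, h, rfl, rfl⟩; exact h⟩
  refine ⟨hS ▸ F.finite_toSet.biUnion fun b hb => (hfib b hb).1.image _, ?_⟩
  calc (S.ncard : ℝ) ≤ ∑ b ∈ F, ((·, b) '' {a | (a, b) ∈ S}).ncard := by
        conv_lhs => rw [hS]
        exact_mod_cast F.set_ncard_biUnion_le _
    _ = ∑ b ∈ F, ({a | (a, b) ∈ S}.ncard : ℝ) := by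
        push_cast
        exact sum_congr rfl fun b _ => by
          rw [Set.ncard_image_of_injective _ (Prod.mk_left_injective b)]
    _ ≤ ∑ b ∈ F, f b := sum_le_sum fun b hb => (hfib b hb).2

lemma Int.ncard_cast_preimage_Icc_le {a b : ℝ} (hab : a ≤ b) :
    (((↑) ⁻¹' Set.Icc a b : Set ℤ).ncard : ℝ) ≤ b - a + 1 := by
  rw [Int.preimage_Icc, ← Finset.coe_Icc, Set.ncard_coe_finset]
  have hceil : ⌈a⌉ ≤ ⌊b⌋ + 1 := (Int.ceil_le_floor_add_one a).trans (by gcongr)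
  have hcard : (#(Icc ⌈a⌉ ⌊b⌋) : ℝ) = ⌊b⌋ + 1 - ⌈a⌉ := by
    exact_mod_cast Int.card_Icc_of_le ⌈a⌉ ⌊b⌋ hceil
  rw [hcard]
  linarith [Int.floor_le b, Int.le_ceil a]

lemma Int.finite_and_ncard_sq_add_mem_Icc_le (u : ℝ) {A B : ℝ} (hAB : A ≤ B) :
    {a : ℤ | ((a : ℝ) + u) ^ 2 ∈ Set.Icc A B}.Finite ∧
      ({a : ℤ | ((a : ℝ) + u) ^ 2 ∈ Set.Icc A B}.ncard : ℝ) ≤ 2 * (√B - √A) + 2 := by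
  have hsqrt : √A ≤ √B := Real.sqrt_le_sqrt hAB
  set L : Set ℤ := (↑) ⁻¹' Set.Icc (-u - √B) (-u - √A)
  set R : Set ℤ := (↑) ⁻¹' Set.Icc (-u + √A) (-u + √B)
  have hsub : {a : ℤ | ((a : ℝ) + u) ^ 2 ∈ Set.Icc A B} ⊆ L ∪ R := by
    rintro a ⟨hA, hB⟩
    have hlo : √A ≤ |(a : ℝ) + u| := by simpa [Real.sqrt_sq_eq_abs] using Real.sqrt_le_sqrt hA
    have hhi : |(a : ℝ) + u| ≤ √B := Real.abs_le_sqrt hB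
    rcases abs_cases ((a : ℝ) + u) with ⟨h, _⟩ | ⟨h, _⟩
    · right; constructor <;> linarith
    · left; constructor <;> linarith
  have hfin : (L ∪ R).Finite := by simp [L, R, Set.finite_Icc]
  refine ⟨hfin.subset hsub, ?_⟩
  calc _ ≤ ((L ∪ R).ncard : ℝ) := by exact_mod_cast Set.ncard_le_ncard hsub hfin
    _ ≤ (L.ncard : ℝ) + R.ncard := by exact_mod_cast Set.ncard_union_le L R
    _ ≤ (-u - √A - (-u - √B) + 1) + (-u + √B - (-u + √A) + 1) := by
        gcongr <;> exact Int.ncard_cast_preimage_Icc_le (by linarith)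
    _ = 2 * (√B - √A) + 2 := by ring

lemma Function.Even.sum_Icc_neg {M : Type*} [AddCommMonoid M] {f : ℤ → M}
    (hf : f.Even) (n : ℕ) :
    ∑ c ∈ Icc (-(n : ℤ)) n, f c = f 0 + 2 • ∑ i ∈ range n, f (i + 1) := by
  induction n with
  | zero => simp
  | succ n ih =>
    have hIcc : Icc (-((n + 1 : ℕ) : ℤ)) (n + 1 : ℕ)
        = insert (-((n : ℤ) + 1)) (insert ((n : ℤ) + 1) (Icc (-(n : ℤ)) n)) := by
      ext c; simp only [mem_Icc, mem_insert]; omega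
    rw [hIcc, sum_insert (by simp; omega), sum_insert (by simp), ih, sum_range_succ, hf]
    abel

lemma integral_sqrt_one_sub_sq_zero_one : ∫ s in (0 : ℝ)..1, √(1 - s ^ 2) = π / 4 := by
  have hsymm : ∫ s in (-1 : ℝ)..0, √(1 - s ^ 2) = ∫ s in (0 : ℝ)..1, √(1 - s ^ 2) := by
    have h := intervalIntegral.integral_comp_neg (a := 0) (b := 1) fun s : ℝ => √(1 - s ^ 2)
    simp only [neg_sq, neg_zero] at h
    exact h.symm
  have hcont : Continuous fun s : ℝ => √(1 - s ^ 2) := by fun_prop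
  have := intervalIntegral.integral_add_adjacent_intervals (μ := MeasureTheory.volume)
    (hcont.intervalIntegrable (-1) 0) (hcont.intervalIntegrable 0 1)
  rw [integral_sqrt_one_sub_sq, hsymm] at this
  linarith

lemma integral_sqrt_one_sub_sq_of_one_le {b : ℝ} (hb : 1 ≤ b) :
    ∫ s in (0 : ℝ)..b, √(1 - s ^ 2) = π / 4 := by
  have hcont : Continuous fun s : ℝ => √(1 - s ^ 2) := by fun_prop
  have htail : ∫ s in (1 : ℝ)..b, √(1 - s ^ 2) = 0 := by
    rw [intervalIntegral.integral_congr (g := fun _ => 0) fun s hs => ?_,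
      intervalIntegral.integral_zero]
    rw [Set.uIcc_of_le hb] at hs
    exact Real.sqrt_eq_zero_of_nonpos (by nlinarith [hs.1])
  rw [← intervalIntegral.integral_add_adjacent_intervals (hcont.intervalIntegrable 0 1)
    (hcont.intervalIntegrable 1 b), integral_sqrt_one_sub_sq_zero_one, htail, add_zero]

lemma integral_sqrt_sub_mul_sq {K v M : ℝ} (hK : 0 ≤ K) (hv : 0 < v) (hM : √K ≤ v * M) :
    ∫ t in (0 : ℝ)..M, √(K - v ^ 2 * t ^ 2) = π * K / (4 * v) := by
  rcases hK.eq_or_lt with rfl | hK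
  · simp [Real.sqrt_eq_zero_of_nonpos, sq_nonneg, mul_nonneg]
  have hsK : 0 < √K := Real.sqrt_pos.mpr hK
  have hscale : ∀ t, √(K - v ^ 2 * t ^ 2) = √K * √(1 - (v / √K * t) ^ 2) := by
    intro t
    rw [← Real.sqrt_mul hK.le]
    congr 1
    rw [mul_pow, div_pow, Real.sq_sqrt hK.le]
    field_simp
  simp_rw [hscale]
  rw [intervalIntegral.integral_const_mul,
    intervalIntegral.integral_comp_mul_left (fun s => √(1 - s ^ 2)) (by positivity), mul_zero,
    integral_sqrt_one_sub_sq_of_one_le (by rwa [div_mul_eq_mul_div, le_div_iff₀ hsK, one_mul]),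
    smul_eq_mul]
  field_simp
  rw [Real.sq_sqrt hK.le]

lemma antitoneOn_sqrt_sub_mul_sq (K v : ℝ) :
    AntitoneOn (fun t : ℝ => √(K - v ^ 2 * t ^ 2)) (Set.Ici 0) := by
  intro s hs t _ hst
  rw [Set.mem_Ici] at hs
  dsimp only
  gcongr

lemma sum_sqrt_sub_mul_sq_le {K v : ℝ} (hK : 0 ≤ K) (hv : 0 < v) (n : ℕ) :
    ∑ i ∈ range n, √(K - v ^ 2 * ((i : ℝ) + 1) ^ 2) ≤ π * K / (4 * v) := by
  set g : ℝ → ℝ := fun t => √(K - v ^ 2 * t ^ 2)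
  have hg : AntitoneOn g (Set.Icc 0 (0 + n)) :=
    (antitoneOn_sqrt_sub_mul_sq K v).mono Set.Icc_subset_Ici_self
  set M := max (n : ℝ) (√K / v)
  calc ∑ i ∈ range n, √(K - v ^ 2 * ((i : ℝ) + 1) ^ 2)
        = ∑ i ∈ range n, g (0 + ↑(i + 1)) := by simp [g]
    _ ≤ ∫ t in (0 : ℝ)..0 + n, g t := hg.sum_le_integral
    _ ≤ ∫ t in (0 : ℝ)..M, g t :=
        intervalIntegral.integral_mono_interval le_rfl (by positivity) (by simp [M])
          (MeasureTheory.ae_of_all _ fun _ => Real.sqrt_nonneg _)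
          ((by fun_prop : Continuous g).intervalIntegrable _ _)
    _ = π * K / (4 * v) := by
        refine integral_sqrt_sub_mul_sq hK hv ?_
        rw [← div_le_iff₀' hv]
        exact le_max_right _ _

lemma sub_sqrt_le_sum_sqrt_sub_mul_sq {K v : ℝ} (hK : 0 ≤ K) (hv : 0 < v) {n : ℕ}
    (hn : √K ≤ v * (n + 1)) :
    π * K / (4 * v) - √K ≤ ∑ i ∈ range n, √(K - v ^ 2 * ((i : ℝ) + 1) ^ 2) := by
  set g : ℝ → ℝ := fun t => √(K - v ^ 2 * t ^ 2)
  have hcont : Continuous g := by fun_prop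
  have hg : AntitoneOn g (Set.Icc 1 (1 + n)) :=
    (antitoneOn_sqrt_sub_mul_sq K v).mono fun t ht => zero_le_one.trans ht.1
  have hhead : ∫ t in (0 : ℝ)..1, g t ≤ √K := by
    simpa using intervalIntegral.integral_mono_on (μ := MeasureTheory.volume) zero_le_one
      (hcont.intervalIntegrable _ _)
      (continuous_const.intervalIntegrable _ _) fun t _ =>
        Real.sqrt_le_sqrt (sub_le_self K (by positivity : 0 ≤ v ^ 2 * t ^ 2))
  have hsplit := intervalIntegral.integral_add_adjacent_intervals (μ := MeasureTheory.volume)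
    (hcont.intervalIntegrable 0 1) (hcont.intervalIntegrable 1 (1 + n))
  rw [integral_sqrt_sub_mul_sq hK hv (M := 1 + n) (by linarith)] at hsplit
  calc π * K / (4 * v) - √K ≤ ∫ t in (1 : ℝ)..1 + n, g t := by linarith
    _ ≤ ∑ i ∈ range n, g (1 + i) := hg.integral_le_sum
    _ = ∑ i ∈ range n, √(K - v ^ 2 * ((i : ℝ) + 1) ^ 2) := by simp [g, add_comm]

def latticeAnnulus (x v T δ : ℝ) : Set (ℤ × ℤ) :=
  {p | |((p.1 : ℝ) + x * p.2) ^ 2 + v ^ 2 * (p.2 : ℝ) ^ 2 - T| ≤ δ}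

lemma mem_latticeAnnulus {x v T δ : ℝ} {p : ℤ × ℤ} :
    p ∈ latticeAnnulus x v T δ ↔
      |((p.1 : ℝ) + x * p.2) ^ 2 + v ^ 2 * (p.2 : ℝ) ^ 2 - T| ≤ δ :=
  Iff.rfl

lemma mem_Icc_of_sq_mul_sq_le {v K : ℝ} (hv : 0 < v) {c : ℤ}
    (hc : v ^ 2 * (c : ℝ) ^ 2 ≤ K) :
    c ∈ Icc (-(⌊√K / v⌋₊ : ℤ)) ⌊√K / v⌋₊ := by
  have habs : (c.natAbs : ℝ) ≤ √K / v := by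
    rw [Nat.cast_natAbs, Int.cast_abs, le_div_iff₀' hv, ← abs_of_pos hv, ← abs_mul]
    exact Real.abs_le_sqrt (by rwa [mul_pow])
  have := Nat.le_floor habs
  rw [mem_Icc]
  omega

lemma sum_Icc_sqrt_sub_sqrt_le {v T δ : ℝ} (hv : 0 < v) (hδ : 0 ≤ δ) (hδT : δ ≤ T) :
    ∑ c ∈ Icc (-(⌊√(T + δ) / v⌋₊ : ℤ)) ⌊√(T + δ) / v⌋₊,
        (2 * (√(T + δ - v ^ 2 * (c : ℝ) ^ 2) - √(T - δ - v ^ 2 * (c : ℝ) ^ 2)) + 2)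
      ≤ 2 * π * δ / v + 4 * (1 + 1 / v) * √(T + δ) + 2 := by
  set n := ⌊√(T + δ) / v⌋₊
  have hn : (n : ℝ) ≤ √(T + δ) / v := Nat.floor_le (by positivity)
  have hsqrt : √(T - δ) ≤ √(T + δ) := Real.sqrt_le_sqrt (by linarith)
  have hupper := sum_sqrt_sub_mul_sq_le (by linarith : 0 ≤ T + δ) hv n
  have hlower := sub_sqrt_le_sum_sqrt_sub_mul_sq (by linarith : 0 ≤ T - δ) hv (n := n) (by
    have := Nat.lt_floor_add_one (√(T + δ) / v)
    rw [div_lt_iff₀ hv] at this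
    linarith)
  have harea : π * (T + δ) / (4 * v) - π * (T - δ) / (4 * v) = π * δ / (2 * v) := by
    field_simp; ring
  have hrhs : 2 * π * δ / v + 4 * (1 + 1 / v) * √(T + δ)
      = 4 * (π * δ / (2 * v)) + 4 * √(T + δ) + 4 * (√(T + δ) / v) := by
    field_simp; ring
  have heven : Function.Even fun c : ℤ =>
      2 * (√(T + δ - v ^ 2 * (c : ℝ) ^ 2) - √(T - δ - v ^ 2 * (c : ℝ) ^ 2)) + 2 :=
    fun c => by simp
  rw [heven.sum_Icc_neg n, hrhs]
  simp only [sum_add_distrib, ← mul_sum, sum_sub_distrib, sum_const, card_range, nsmul_eq_mul,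
    Int.cast_zero, Int.cast_add, Int.cast_natCast, Int.cast_one, ne_eq, OfNat.ofNat_ne_zero,
    not_false_eq_true, zero_pow, mul_zero, sub_zero]
  linarith

theorem latticeAnnulus_finite_and_ncard_le (x : ℝ) {v T δ : ℝ} (hv : 0 < v) (hδ : 0 ≤ δ)
    (hδT : δ ≤ T) :
    (latticeAnnulus x v T δ).Finite ∧
      ((latticeAnnulus x v T δ).ncard : ℝ)
        ≤ 2 * π * δ / v + 4 * (1 + 1 / v) * √(T + δ) + 2 := by
  have hfiber (c : ℤ) : {a | (a, c) ∈ latticeAnnulus x v T δ}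
      = {a : ℤ | ((a : ℝ) + x * c) ^ 2 ∈
          Set.Icc (T - δ - v ^ 2 * c ^ 2) (T + δ - v ^ 2 * c ^ 2)} := by
    ext a
    simp only [Set.mem_ofPred_eq, Set.mem_Icc, mem_latticeAnnulus, abs_le]
    constructor <;> rintro ⟨h₁, h₂⟩ <;> constructor <;> linarith
  have hrows : ∀ p ∈ latticeAnnulus x v T δ,
      p.2 ∈ Icc (-(⌊√(T + δ) / v⌋₊ : ℤ)) ⌊√(T + δ) / v⌋₊ := by
    rintro ⟨a, c⟩ hp
    rw [mem_latticeAnnulus, abs_le] at hp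
    exact mem_Icc_of_sq_mul_sq_le hv (by nlinarith [sq_nonneg ((a : ℝ) + x * c)])
  obtain ⟨hfin, hcard⟩ := Set.finite_and_ncard_le_sum_of_fibers _ _ hrows _ fun c _ => by
    rw [hfiber]
    exact Int.finite_and_ncard_sq_add_mem_Icc_le _ (by linarith)
  exact ⟨hfin, hcard.trans (sum_Icc_sqrt_sub_sqrt_le hv hδ hδT)⟩

lemma inFD.one_half_le_im {z : ℂ} (hz : inFD z) : 1 / 2 ≤ z.im := by
  obtain ⟨him, hre, hnorm⟩ := hz
  have hsq : ‖z‖ ^ 2 = z.re ^ 2 + z.im ^ 2 := by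
    rw [Complex.sq_norm, Complex.normSq_apply]; ring
  nlinarith [abs_nonneg z.re, sq_abs z.re]

lemma setOf_abs_sub_le_eq_latticeAnnulus (ξ : ℂ) {ν : ℝ} (hν : ν ^ 2 = 1) (T δ : ℝ) :
    {p : ℤ × ℤ | |(p.1 : ℝ) ^ 2 + 2 * ν * |ξ.re| * ((p.1 : ℝ) * (p.2 : ℝ))
        + ‖ξ‖ ^ 2 * (p.2 : ℝ) ^ 2 - T| ≤ δ}
      = latticeAnnulus (ν * |ξ.re|) ξ.im T δ := by
  have hsq : ‖ξ‖ ^ 2 = ξ.re ^ 2 + ξ.im ^ 2 := by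
    rw [Complex.sq_norm, Complex.normSq_apply]; ring
  ext p
  rw [mem_latticeAnnulus, Set.mem_ofPred_eq]
  congr! 2
  linear_combination (p.2 : ℝ) ^ 2 * hsq - (p.2 : ℝ) ^ 2 * ξ.re ^ 2 * hν
    - (p.2 : ℝ) ^ 2 * ν ^ 2 * sq_abs ξ.re

theorem lattice_points_in_annulus_general
    (ξ : ℂ) (hξ : inFD ξ) (y : ℝ) (hy : 0 < y) (ε : ℝ)
    (hε' : ε ≤ (ξ.im / (100 * (‖ξ‖) ^ 3)) ^ 2)
    (ν : ℝ) (hν : ν = 1 ∨ ν = -1)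
    (S : Set (ℤ × ℤ))
    (hS : S = {p : ℤ × ℤ |
      |(p.1 : ℝ) ^ 2 + 2 * ν * |ξ.re| * ((p.1 : ℝ) * (p.2 : ℝ))
          + (‖ξ‖) ^ 2 * (p.2 : ℝ) ^ 2 - ξ.im / y|
        ≤ 50 * (‖ξ‖) ^ 3 * Real.sqrt ε / y}) :
    S.Finite ∧
    (S.ncard : ℝ) ≤ 16 * π * (Real.sqrt (2 * ξ.im) + Real.sqrt y) / Real.sqrt y
        + 100 * π * (‖ξ‖) ^ 3 * Real.sqrt ε / (y * ξ.im) := by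
  have him : 1 / 2 ≤ ξ.im := hξ.one_half_le_im
  have hnorm : 0 < ‖ξ‖ := one_pos.trans_le hξ.2.2
  have hδT : 50 * ‖ξ‖ ^ 3 * √ε / y ≤ ξ.im / y := by
    have hsqrt : √ε ≤ ξ.im / (100 * ‖ξ‖ ^ 3) :=
      (Real.sqrt_le_left (by positivity)).mpr hε'
    calc 50 * ‖ξ‖ ^ 3 * √ε / y
        ≤ 50 * ‖ξ‖ ^ 3 * (ξ.im / (100 * ‖ξ‖ ^ 3)) / y := by gcongr
      _ = ξ.im / y / 2 := by field_simp; ring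
      _ ≤ ξ.im / y := half_le_self (by positivity)
  rw [hS, setOf_abs_sub_le_eq_latticeAnnulus ξ (by rcases hν with rfl | rfl <;> norm_num)]
  obtain ⟨hfin, hcard⟩ := latticeAnnulus_finite_and_ncard_le (ν * |ξ.re|)
    (by linarith : 0 < ξ.im) (by positivity) hδT
  refine ⟨hfin, hcard.trans ?_⟩
  have harea : 2 * π * (50 * ‖ξ‖ ^ 3 * √ε / y) / ξ.im
      = 100 * π * ‖ξ‖ ^ 3 * √ε / (y * ξ.im) := by
    field_simp; ring
  have hsqrt : 16 * π * (√(2 * ξ.im) + √y) / √y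
      = 16 * π * √(2 * (ξ.im / y)) + 16 * π := by
    rw [← mul_div_assoc, Real.sqrt_div (by linarith)]
    field_simp [(Real.sqrt_pos.mpr hy).ne']
  have hperimeter : 4 * (1 + 1 / ξ.im) * √(ξ.im / y + 50 * ‖ξ‖ ^ 3 * √ε / y)
      ≤ 4 * (1 + 2) * √(2 * (ξ.im / y)) := by
    gcongr
    · rw [div_le_iff₀ (by linarith)]; linarith
    · linarith
  rw [harea, hsqrt]
  nlinarith [Real.pi_gt_three, Real.sqrt_nonneg (2 * (ξ.im / y))]

/-- The number of integer points in the elliptical annulus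
`|a² + 2ν|Re ξ|ac + |ξ|²c² − Im(ξ)/y| ≤ 50|ξ|³ √ε / y` is at most
`16π(√(2 Im ξ) + √y)/√y + 100π|ξ|³√ε/(y · Im ξ)`. -/
theorem lattice_points_in_annulus
    (ξ : ℂ) (hξ : inFD ξ) (y : ℝ) (hy : 0 < y) (ε : ℝ) (hε : 0 < ε)
    (hε' : ε ≤ (ξ.im / (100 * (‖ξ‖) ^ 3)) ^ 2)
    (ν : ℝ) (hν : ν = 1 ∨ ν = -1)
    (S : Set (ℤ × ℤ))
    (hS : S = {p : ℤ × ℤ |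
      |(p.1 : ℝ) ^ 2 + 2 * ν * |ξ.re| * ((p.1 : ℝ) * (p.2 : ℝ))
          + (‖ξ‖) ^ 2 * (p.2 : ℝ) ^ 2 - ξ.im / y|
        ≤ 50 * (‖ξ‖) ^ 3 * Real.sqrt ε / y}) :
    S.Finite ∧
    (S.ncard : ℝ) ≤ 16 * π * (Real.sqrt (2 * ξ.im) + Real.sqrt y) / Real.sqrt y
        + 100 * π * (‖ξ‖) ^ 3 * Real.sqrt ε / (y * ξ.im) :=
  lattice_points_in_annulus_general ξ hξ y hy ε hε' ν hν S hS
end
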